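/- arXiv:2204.00275 — 7 statements merged into one kernel-verified Lean document; each statement's English description precedes it below -/
import Mathlib

section
/- Let H be a real Hilbert space, let {C_i}_{i=1}^m be a finite family of nonempty, closed and convex subsets of H, let r > 1 be an integer, let f : ℕ → {1,…,m} be surjective, and let S_n and the sequence (x_n) be as in the setup. Suppose there exists a weakly regular operator S : H → H with Fix(S) ≠ ∅ and Fix(S) ⊆ ∩_{i=1}^m C_i, and suppose that ‖S x_n − x_n‖ → 0. Then (x_n) converges weakly to a point x_* ∈ ∩_{i=1}^m C_i. -/
open Filter Topology RealInnerProductSpace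

variable {H : Type*} [NormedAddCommGroup H] [InnerProductSpace ℝ H] [CompleteSpace H]

/-- Weak convergence in a Hilbert space: `x n ⇀ p`. -/
def WeakConvergesTo (x : ℕ → H) (p : H) : Prop :=
  ∀ y : H, Tendsto (fun n => ⟪x n, y⟫) atTop (𝓝 ⟪p, y⟫)

/-- `compSeq n g = g (n-1) ∘ ⋯ ∘ g 0` (the identity when `n = 0`). -/
def compSeq {α : Type*} : ℕ → (ℕ → α → α) → (α → α)
  | 0, _ => id
  | n + 1, g => g n ∘ compSeq n g

/-- `P` is the metric projection onto `C`. -/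
def IsProjOn (C : Set H) (P : H → H) : Prop :=
  ∀ x, P x ∈ C ∧ ∀ y ∈ C, ‖x - P x‖ ≤ ‖x - y‖

/-- Nonexpansive operator. -/
def Nonexpansive (T : H → H) : Prop := ∀ x y, ‖T x - T y‖ ≤ ‖x - y‖

/-- Condition (S). -/
def CondS (T : H → H) : Prop :=
  ∀ x y : ℕ → H, (∃ c, ∀ n, ‖x n - y n‖ ≤ c) →
    Tendsto (fun n => ‖x n - y n‖ - ‖T (x n) - T (y n)‖) atTop (𝓝 0) →
    Tendsto (fun n => x n - y n - (T (x n) - T (y n))) atTop (𝓝 (0 : H))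

/-- Strongly nonexpansive operator. -/
def StronglyNonexpansive (T : H → H) : Prop := Nonexpansive T ∧ CondS T

/-- Firmly nonexpansive operator. -/
def FirmlyNonexpansive (T : H → H) : Prop :=
  ∀ x y, ‖T x - T y‖ ^ 2 ≤ ⟪T x - T y, x - y⟫

/-- Averaged operator. -/
def Averaged (T : H → H) : Prop :=
  ∃ lam ∈ Set.Ioo (0 : ℝ) 1, ∃ U : H → H, Nonexpansive U ∧
    T = fun x => (1 - lam) • x + lam • U x

/-- The unrestricted `r`-set Douglas–Rachford operators `S n` associated with projections
`proj i` onto the sets `C i`, indices chosen by `f`: `S n = 2⁻¹ (Id + R_{C_{f((r-1)n+r-1)}} ∘ ⋯ ∘ R_{C_{f((r-1)n)}})`. -/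
noncomputable def drS (proj : ℕ → H → H) (r : ℕ) (f : ℕ → ℕ) (n : ℕ) : H → H :=
  fun x => (2⁻¹ : ℝ) • (x + compSeq r (fun j y => (2 : ℝ) • proj (f ((r - 1) * n + j)) y - y) x)

/-!
Each operator `drS proj r f n` is the mean of the identity and a composition of reflections
`2 P - Id` in closed convex sets; projections are firmly nonexpansive, so reflections and hence
`drS proj r f n` are nonexpansive, and every point of `⋂ C i` is fixed. The iterates are therefore
Fejér monotone with respect to `⋂ C i`. Weak regularity of `S` and `‖S xₙ - xₙ‖ → 0` put every weak
subsequential limit in `Fix S ⊆ ⋂ C i`, and Opial's argument finishes: bounded sequences have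
weakly convergent subsequences, and two weak cluster points `p`, `q` of a Fejér monotone sequence
coincide because `⟪xₙ, p - q⟫` converges, by polarization.
-/

section NormedGroup

variable {E : Type*} [NormedAddCommGroup E]

theorem IsProjOn.apply_eq_self {C : Set E} {P : E → E} (hP : IsProjOn C P) {z : E} (hz : z ∈ C) :
    P z = z := by
  have h := (hP z).2 z hz
  rw [sub_self, norm_zero, norm_le_zero_iff, sub_eq_zero] at h
  exact h.symm

theorem compSeq_apply_eq_self {α : Type*} {g : ℕ → α → α} {z : α} (hg : ∀ j, g j z = z) :
    ∀ r, compSeq r g z = z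
  | 0 => rfl
  | r + 1 => by rw [compSeq, Function.comp_apply, compSeq_apply_eq_self hg r, hg]

theorem Nonexpansive.compSeq {g : ℕ → E → E} (hg : ∀ j, Nonexpansive (g j)) :
    ∀ r, Nonexpansive (compSeq r g)
  | 0 => fun _ _ => le_rfl
  | r + 1 => fun a b => (hg r _ _).trans (Nonexpansive.compSeq hg r a b)

theorem antitone_norm_sub_of_nonexpansive {T : ℕ → E → E} {x : ℕ → E} {z : E}
    (hx : ∀ n, x (n + 1) = T n (x n)) (hT : ∀ n, Nonexpansive (T n)) (hz : ∀ n, T n z = z) :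
    Antitone fun n => ‖x n - z‖ :=
  antitone_nat_of_succ_le fun n =>
    calc ‖x (n + 1) - z‖ = ‖T n (x n) - T n z‖ := by rw [hx, hz]
      _ ≤ ‖x n - z‖ := hT n _ _

end NormedGroup

section InnerProduct

variable {E : Type*} [NormedAddCommGroup E] [InnerProductSpace ℝ E]

namespace IsProjOn

variable {C : Set E} {P : E → E}

theorem inner_sub_le_zero (hP : IsProjOn C P) (hC : Convex ℝ C) (x : E) {w : E} (hw : w ∈ C) :
    ⟪x - P x, w - P x⟫ ≤ 0 := by
  have : Nonempty C := ⟨⟨P x, (hP x).1⟩⟩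
  have hmin : ‖x - P x‖ = ⨅ w : C, ‖x - (w : E)‖ :=
    le_antisymm (le_ciInf fun w => (hP x).2 w w.2)
      (ciInf_le (f := fun w : C => ‖x - (w : E)‖) ⟨0, by rintro _ ⟨w, rfl⟩; exact norm_nonneg _⟩
        ⟨P x, (hP x).1⟩)
  exact (norm_eq_iInf_iff_real_inner_le_zero hC (hP x).1).1 hmin w hw

theorem firmlyNonexpansive (hP : IsProjOn C P) (hC : Convex ℝ C) : FirmlyNonexpansive P := by
  intro x y
  have hx := hP.inner_sub_le_zero hC x (hP y).1
  have hy := hP.inner_sub_le_zero hC y (hP x).1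
  have key : ⟪P x - P y, x - y⟫ - ‖P x - P y‖ ^ 2
      = -⟪x - P x, P y - P x⟫ - ⟪y - P y, P x - P y⟫ := by
    simp only [inner_sub_left, inner_sub_right, ← real_inner_self_eq_norm_sq]
    rw [real_inner_comm (P x) x, real_inner_comm (P y) y, real_inner_comm (P x) (P y),
      real_inner_comm (P y) x, real_inner_comm (P x) y]
    ring
  linarith

end IsProjOn

theorem FirmlyNonexpansive.nonexpansive_two_smul_sub {P : E → E} (hP : FirmlyNonexpansive P) :
    Nonexpansive fun x => (2 : ℝ) • P x - x := by
  intro x y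
  have hsq : ‖((2 : ℝ) • P x - x) - ((2 : ℝ) • P y - y)‖ ^ 2 ≤ ‖x - y‖ ^ 2 := by
    have e : ((2 : ℝ) • P x - x) - ((2 : ℝ) • P y - y) = (2 : ℝ) • (P x - P y) - (x - y) := by
      module
    rw [e, norm_sub_sq_real, norm_smul, real_inner_smul_left, Real.norm_ofNat]
    nlinarith [hP x y]
  exact (sq_le_sq₀ (norm_nonneg _) (norm_nonneg _)).1 hsq

theorem Nonexpansive.inv_two_smul_add_self {T : E → E} (hT : Nonexpansive T) :
    Nonexpansive fun x => (2⁻¹ : ℝ) • (x + T x) := by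
  intro x y
  rw [← smul_sub, norm_smul, add_sub_add_comm, norm_inv, Real.norm_ofNat]
  linarith [norm_add_le (x - y) (T x - T y), hT x y]

variable {proj : ℕ → E → E} {r : ℕ} {f : ℕ → ℕ}

theorem drS_nonexpansive (hproj : ∀ k, FirmlyNonexpansive (proj (f k))) (n : ℕ) :
    Nonexpansive (drS proj r f n) :=
  Nonexpansive.inv_two_smul_add_self
    (Nonexpansive.compSeq (fun _ => (hproj _).nonexpansive_two_smul_sub) r)

theorem drS_apply_eq_self {z : E} (hz : ∀ k, proj (f k) z = z) (n : ℕ) :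
    drS proj r f n z = z := by
  have hrefl : ∀ j, (2 : ℝ) • proj (f ((r - 1) * n + j)) z - z = z := fun j => by
    rw [hz, two_smul, add_sub_cancel_right]
  rw [drS, compSeq_apply_eq_self
    (g := fun j y => (2 : ℝ) • proj (f ((r - 1) * n + j)) y - y) hrefl r, ← two_smul ℝ z, smul_smul]
  norm_num

theorem eq_of_weakConvergesTo_comp {x : ℕ → E} {p q : E} {a b : ℝ}
    (ha : Tendsto (fun n => ‖x n - p‖) atTop (𝓝 a)) (hb : Tendsto (fun n => ‖x n - q‖) atTop (𝓝 b))
    {φ ψ : ℕ → ℕ} (hφ : Tendsto φ atTop atTop) (hψ : Tendsto ψ atTop atTop)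
    (hp : WeakConvergesTo (x ∘ φ) p) (hq : WeakConvergesTo (x ∘ ψ) q) : p = q := by
  have hpolar : ∀ n, ⟪x n, p - q⟫ = (‖x n - q‖ ^ 2 - ‖x n - p‖ ^ 2 + ‖p‖ ^ 2 - ‖q‖ ^ 2) / 2 := by
    intro n
    rw [inner_sub_right, norm_sub_sq_real, norm_sub_sq_real]
    ring
  have hlim : Tendsto (fun n => ⟪x n, p - q⟫) atTop
      (𝓝 ((b ^ 2 - a ^ 2 + ‖p‖ ^ 2 - ‖q‖ ^ 2) / 2)) := by
    simp only [hpolar]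
    exact ((((hb.pow 2).sub (ha.pow 2)).add_const _).sub_const _).div_const 2
  have hp' := tendsto_nhds_unique (hp (p - q)) (hlim.comp hφ)
  have hq' := tendsto_nhds_unique (hq (p - q)) (hlim.comp hψ)
  rw [← sub_eq_zero, ← inner_self_eq_zero (𝕜 := ℝ), inner_sub_left, hp', hq', sub_self]

end InnerProduct

theorem exists_strictMono_weakConvergesTo {u : ℕ → H} {c : ℝ} (hc : ∀ n, ‖u n‖ ≤ c) :
    ∃ q : H, ∃ φ : ℕ → ℕ, StrictMono φ ∧ WeakConvergesTo (u ∘ φ) q := by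
  -- sequential Banach–Alaoglu in the separable Hilbert space `K`, identified with its dual by Riesz
  set K := (Submodule.span ℝ (Set.range u)).topologicalClosure
  have hK : ∀ n, u n ∈ K := fun n =>
    Submodule.le_topologicalClosure _ (Submodule.subset_span ⟨n, rfl⟩)
  have : CompleteSpace K := (Submodule.isClosed_topologicalClosure _).completeSpace_coe
  have : TopologicalSpace.SeparableSpace K :=
    (Set.countable_range u).isSeparable.span.closure.separableSpace
  let v : ℕ → WeakDual ℝ K := fun n =>
    WeakDual.toStrongDual.symm (InnerProductSpace.toDual ℝ K ⟨u n, hK n⟩)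
  have hv : ∀ n, v n ∈ WeakDual.toStrongDual ⁻¹' Metric.closedBall 0 c := fun n => by
    refine (dist_zero_right (WeakDual.toStrongDual (v n))).trans_le ?_
    simpa [v] using hc n
  obtain ⟨w, -, φ, hφ, hlim⟩ := WeakDual.isSeqCompact_closedBall ℝ K 0 c hv
  refine ⟨(InnerProductSpace.toDual ℝ K).symm (WeakDual.toStrongDual w), φ, hφ, fun y => ?_⟩
  have hy := ((WeakDual.eval_continuous (K.orthogonalProjectionOnto y)).tendsto w).comp hlim
  convert hy using 2
  · simp [v]
  · rw [← Submodule.inner_orthogonalProjectionOnto_eq_of_mem_left,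
      InnerProductSpace.toDual_symm_apply]
    rfl

theorem exists_weakConvergesTo_of_fejer {F : Set H} {x : ℕ → H} (hF : F.Nonempty)
    (hfejer : ∀ z ∈ F, Antitone fun n => ‖x n - z‖)
    (hcluster : ∀ (φ : ℕ → ℕ) (q : H), Tendsto φ atTop atTop → WeakConvergesTo (x ∘ φ) q → q ∈ F) :
    ∃ p ∈ F, WeakConvergesTo x p := by
  obtain ⟨z₀, hz₀⟩ := hF
  have hbdd : ∀ n, ‖x n‖ ≤ ‖z₀‖ + ‖x 0 - z₀‖ := fun n =>
    (norm_le_norm_add_norm_sub' (x n) z₀).trans (add_le_add_right (hfejer z₀ hz₀ (Nat.zero_le n)) _)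
  have hlim : ∀ z ∈ F, ∃ l, Tendsto (fun n => ‖x n - z‖) atTop (𝓝 l) := fun z hz =>
    ⟨_, tendsto_atTop_ciInf (hfejer z hz) ⟨0, by rintro _ ⟨n, rfl⟩; exact norm_nonneg _⟩⟩
  have hsub : ∀ φ : ℕ → ℕ, Tendsto φ atTop atTop →
      ∃ q ∈ F, ∃ ψ : ℕ → ℕ, StrictMono ψ ∧ WeakConvergesTo (x ∘ φ ∘ ψ) q := fun φ hφ => by
    obtain ⟨q, ψ, hψ, hq⟩ := exists_strictMono_weakConvergesTo fun n => hbdd (φ n)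
    exact ⟨q, hcluster _ q (hφ.comp hψ.tendsto_atTop) hq, ψ, hψ, hq⟩
  obtain ⟨p, hp, ψ, hψ, hpψ⟩ := hsub id tendsto_id
  refine ⟨p, hp, fun y => tendsto_of_subseq_tendsto fun φ hφ => ?_⟩
  obtain ⟨q, hq, χ, hχ, hqχ⟩ := hsub φ hφ
  obtain ⟨a, ha⟩ := hlim p hp
  obtain ⟨b, hb⟩ := hlim q hq
  obtain rfl : p = q :=
    eq_of_weakConvergesTo_comp ha hb hψ.tendsto_atTop (hφ.comp hχ.tendsto_atTop) hpψ hqχ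
  exact ⟨χ, hqχ y⟩

theorem stmt0_general
    (m r : ℕ)
    (C : ℕ → Set H)
    (hC : ∀ i ∈ Set.Icc 1 m, (C i).Nonempty ∧ IsClosed (C i) ∧ Convex ℝ (C i))
    (proj : ℕ → H → H) (hproj : ∀ i ∈ Set.Icc 1 m, IsProjOn (C i) (proj i))
    (f : ℕ → ℕ) (hf : Set.range f = Set.Icc 1 m)
    (x : ℕ → H) (hx : ∀ n, x (n + 1) = drS proj r f n (x n))
    (S : H → H)
    (hSreg : ∀ (u : ℕ → H) (p : H), WeakConvergesTo u p →
      Tendsto (fun n => S (u n) - u n) atTop (𝓝 (0 : H)) → S p = p)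
    (hSfix : ∃ z, S z = z)
    (hSsub : {z | S z = z} ⊆ ⋂ i ∈ Set.Icc 1 m, C i)
    (hconv : Tendsto (fun n => ‖S (x n) - x n‖) atTop (𝓝 0)) :
    ∃ p ∈ ⋂ i ∈ Set.Icc 1 m, C i, WeakConvergesTo x p := by
  have hfC : ∀ k, f k ∈ Set.Icc 1 m := fun k => hf ▸ Set.mem_range_self k
  obtain ⟨z₀, hz₀⟩ := hSfix
  refine exists_weakConvergesTo_of_fejer ⟨z₀, hSsub hz₀⟩ (fun z hz => ?_) fun φ q hφ hq => ?_
  · exact antitone_norm_sub_of_nonexpansive hx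
      (drS_nonexpansive fun k => (hproj _ (hfC k)).firmlyNonexpansive (hC _ (hfC k)).2.2)
      (drS_apply_eq_self fun k => (hproj _ (hfC k)).apply_eq_self (Set.mem_iInter₂.1 hz _ (hfC k)))
  · exact hSsub (hSreg _ q hq ((tendsto_zero_iff_norm_tendsto_zero.2 hconv).comp hφ))

/-- Theorem 3.1(i): unrestricted DR algorithm with an auxiliary weakly regular
operator `S`. -/
theorem stmt0
    (m r : ℕ) (hr : 1 < r)
    (C : ℕ → Set H)
    (hC : ∀ i ∈ Set.Icc 1 m, (C i).Nonempty ∧ IsClosed (C i) ∧ Convex ℝ (C i))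
    (proj : ℕ → H → H) (hproj : ∀ i ∈ Set.Icc 1 m, IsProjOn (C i) (proj i))
    (f : ℕ → ℕ) (hf : Set.range f = Set.Icc 1 m)
    (x : ℕ → H) (hx : ∀ n, x (n + 1) = drS proj r f n (x n))
    (S : H → H)
    (hSreg : ∀ (u : ℕ → H) (p : H), WeakConvergesTo u p →
      Tendsto (fun n => S (u n) - u n) atTop (𝓝 (0 : H)) → S p = p)
    (hSfix : ∃ z, S z = z)
    (hSsub : {z | S z = z} ⊆ ⋂ i ∈ Set.Icc 1 m, C i)
    (hconv : Tendsto (fun n => ‖S (x n) - x n‖) atTop (𝓝 0)) :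
    ∃ p ∈ ⋂ i ∈ Set.Icc 1 m, C i, WeakConvergesTo x p :=
  stmt0_general m r C hC proj hproj f hf x hx S hSreg hSfix hSsub hconv
end

section
/- Let H be a real Hilbert space, let {C_i}_{i=1}^m be a finite family of nonempty, closed and convex subsets of H such that int ∩_{i=1}^m C_i ≠ ∅, let r > 1 be an integer, let f : ℕ → {1,…,m} be surjective, let j_f ∈ ℕ satisfy f({1,…,j_f}) = {1,…,m}, and let Q := S_{j_f}∘⋯∘S_0 be the composite unrestricted DR operator. Then for every y₀ ∈ H, the sequence defined by y_n := Q(y_{n−1}) converges weakly to a point y_* ∈ ∩_{i=1}^m C_i. -/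
open Filter Topology RealInnerProductSpace

variable {H : Type*} [NormedAddCommGroup H] [InnerProductSpace ℝ H] [CompleteSpace H]

section DRAux

lemma proj_vi {C : Set H} {P : H → H} (hco : Convex ℝ C) (hP : IsProjOn C P)
    (x : H) {c : H} (hc : c ∈ C) : ⟪x - P x, c - P x⟫ ≤ 0 := by
  set a := x - P x with ha
  set b := c - P x with hb
  have key : ∀ t : ℝ, 0 < t → t ≤ 1 → ⟪a, b⟫ ≤ t / 2 * ‖b‖ ^ 2 := by
    intro t ht ht1
    have hmem : P x + t • b ∈ C := by
      have h := hco (hP x).1 hc (by linarith : (0:ℝ) ≤ 1 - t) ht.le (by ring)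
      have he : (1 - t) • P x + t • c = P x + t • b := by rw [hb]; module
      rwa [he] at h
    have h2 := (hP x).2 _ hmem
    have hx : x - (P x + t • b) = a - t • b := by rw [ha]; module
    rw [hx] at h2
    have hsq : ‖a‖ ^ 2 ≤ ‖a - t • b‖ ^ 2 := by
      exact pow_le_pow_left₀ (norm_nonneg _) h2 2
    have hexp : ‖a - t • b‖ ^ 2 = ‖a‖ ^ 2 - 2 * (t * ⟪a, b⟫) + t ^ 2 * ‖b‖ ^ 2 := by
      rw [norm_sub_sq_real, real_inner_smul_right, norm_smul, Real.norm_eq_abs,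
        abs_of_pos ht, mul_pow]
    nlinarith [hsq, hexp]
  by_contra hcon
  push_neg at hcon
  set I := ⟪a, b⟫
  set B := ‖b‖ ^ 2 with hB
  have hB0 : 0 ≤ B := by positivity
  set t := min 1 (I / (B + 1)) with htdef
  have ht0 : 0 < t := lt_min one_pos (by positivity)
  have ht1 : t ≤ 1 := min_le_left _ _
  have htB : t * (B + 1) ≤ I := by
    rw [← le_div_iff₀ (by positivity)]
    exact min_le_right _ _
  have hk := key t ht0 ht1
  nlinarith [hk, htB, ht0, hB0]

lemma refl_key {C : Set H} {P : H → H} (hco : Convex ℝ C) (hP : IsProjOn C P)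
    {z : H} {ε : ℝ} (hε : 0 ≤ ε) (hball : ∀ u : H, ‖u‖ ≤ ε → z + u ∈ C) (x : H) :
    ‖((2:ℝ) • P x - x) - z‖ ^ 2 ≤ ‖x - z‖ ^ 2 - 4 * ε * ‖x - P x‖ := by
  set d := x - P x with hd
  have hin : ε * ‖d‖ ≤ ⟪P x - z, d⟫ := by
    by_cases h0 : d = 0
    · simp [h0]
    · have hdn : 0 < ‖d‖ := norm_pos_iff.2 h0
      have hu : ‖(ε / ‖d‖) • d‖ ≤ ε := by
        rw [norm_smul, Real.norm_eq_abs, abs_of_nonneg (by positivity)]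
        rw [div_mul_cancel₀ _ hdn.ne']
      have hc := proj_vi hco hP x (hball _ hu)
      rw [← hd, show (z + (ε / ‖d‖) • d) - P x = (z - P x) + (ε / ‖d‖) • d by module,
        inner_add_right, real_inner_smul_right, real_inner_self_eq_norm_sq] at hc
      have hcomm : ⟪d, z - P x⟫ = -⟪P x - z, d⟫ := by
        rw [real_inner_comm, show z - P x = -(P x - z) by abel, inner_neg_left]
      rw [hcomm] at hc
      have : ε / ‖d‖ * ‖d‖ ^ 2 = ε * ‖d‖ := by field_simp
      nlinarith [hc]
  have hRz : ((2:ℝ) • P x - x) - z = (x - z) - (2:ℝ) • d := by rw [hd]; module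
  rw [hRz, norm_sub_sq_real, real_inner_smul_right, norm_smul]
  have hxz : ⟪x - z, d⟫ = ‖d‖ ^ 2 + ⟪P x - z, d⟫ := by
    rw [show x - z = d + (P x - z) by rw [hd]; module, inner_add_left,
      real_inner_self_eq_norm_sq]
  rw [hxz]
  have : (‖(2:ℝ)‖ * ‖d‖) ^ 2 = 4 * ‖d‖ ^ 2 := by
    rw [Real.norm_eq_abs]; norm_num; ring
  rw [this]
  linarith [hin]

lemma chain_move {g : ℕ → H → H} {gap : ℕ → H → ℝ}
    (hmove : ∀ k x, ‖g k x - x‖ ≤ 2 * gap k x) (x : H) :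
    ∀ j, ‖compSeq j g x - x‖ ≤ 2 * ∑ k ∈ Finset.range j, gap k (compSeq k g x) := by
  intro j
  induction j with
  | zero => simp [compSeq]
  | succ j ih =>
    have h2 := hmove j (compSeq j g x)
    have hc : compSeq (j+1) g x = g j (compSeq j g x) := rfl
    rw [Finset.sum_range_succ, hc]
    have htri := dist_triangle (g j (compSeq j g x)) (compSeq j g x) x
    simp only [dist_eq_norm] at htri
    linarith

lemma chain_key {g : ℕ → H → H} {gap : ℕ → H → ℝ} {z : H} {ε : ℝ}
    (hstep : ∀ k x, ‖g k x - z‖ ^ 2 ≤ ‖x - z‖ ^ 2 - 4 * ε * gap k x)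
    (hmove : ∀ k x, ‖g k x - x‖ ≤ 2 * gap k x) (x : H) :
    ∀ j, ‖compSeq j g x - z‖ ^ 2 ≤ ‖x - z‖ ^ 2
        - 4 * ε * ∑ k ∈ Finset.range j, gap k (compSeq k g x) := by
  intro j
  induction j with
  | zero => simp [compSeq]
  | succ j ih =>
    have h1 := hstep j (compSeq j g x)
    have hc : compSeq (j+1) g x = g j (compSeq j g x) := rfl
    rw [Finset.sum_range_succ, hc]
    linarith

/-- the intermediate points in the chain of reflections within `drS _ _ _ n`. -/
noncomputable def drW (proj : ℕ → H → H) (r : ℕ) (f : ℕ → ℕ) (n k : ℕ) (x : H) : H :=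
  compSeq k (fun j y => (2 : ℝ) • proj (f ((r - 1) * n + j)) y - y) x

/-- total gap within one application of `drS _ _ _ n`. -/
noncomputable def drGap (proj : ℕ → H → H) (r : ℕ) (f : ℕ → ℕ) (n : ℕ) (x : H) : ℝ :=
  ∑ k ∈ Finset.range r,
    ‖drW proj r f n k x - proj (f ((r - 1) * n + k)) (drW proj r f n k x)‖

lemma drGap_nonneg (proj : ℕ → H → H) (r : ℕ) (f : ℕ → ℕ) (n : ℕ) (x : H) :
    0 ≤ drGap proj r f n x :=
  Finset.sum_nonneg fun _ _ => norm_nonneg _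

lemma refl_move (proj : ℕ → H → H) (r : ℕ) (f : ℕ → ℕ) (n : ℕ) :
    ∀ k (y : H), ‖((2 : ℝ) • proj (f ((r - 1) * n + k)) y - y) - y‖
      ≤ 2 * ‖y - proj (f ((r - 1) * n + k)) y‖ := by
  intro k y
  have he : ((2:ℝ) • proj (f ((r - 1) * n + k)) y - y) - y
      = (2:ℝ) • (proj (f ((r - 1) * n + k)) y - y) := by module
  rw [he, norm_smul]
  simp only [Real.norm_ofNat]
  rw [norm_sub_rev]

lemma drW_move (proj : ℕ → H → H) (r : ℕ) (f : ℕ → ℕ) (n : ℕ) (x : H) {k : ℕ}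
    (hk : k ≤ r) : ‖drW proj r f n k x - x‖ ≤ 2 * drGap proj r f n x := by
  have h := chain_move (gap := fun k y => ‖y - proj (f ((r - 1) * n + k)) y‖)
    (refl_move proj r f n) x k
  have hsub : Finset.range k ⊆ Finset.range r := Finset.range_subset_range.mpr hk
  have h2 := Finset.sum_le_sum_of_subset_of_nonneg (f := fun k0 =>
    ‖compSeq k0 (fun j y => (2 : ℝ) • proj (f ((r - 1) * n + j)) y - y) x
      - proj (f ((r - 1) * n + k0))
        (compSeq k0 (fun j y => (2 : ℝ) • proj (f ((r - 1) * n + j)) y - y) x)‖)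
    hsub (fun _ _ _ => norm_nonneg _)
  have hEq : drGap proj r f n x = ∑ k0 ∈ Finset.range r,
      ‖compSeq k0 (fun j y => (2 : ℝ) • proj (f ((r - 1) * n + j)) y - y) x
        - proj (f ((r - 1) * n + k0))
          (compSeq k0 (fun j y => (2 : ℝ) • proj (f ((r - 1) * n + j)) y - y) x)‖ := rfl
  unfold drW
  rw [hEq]
  linarith [h, h2]

lemma drS_key (proj : ℕ → H → H) (r : ℕ) (f : ℕ → ℕ) {z : H} {ε : ℝ}
    (hrefl : ∀ k (x : H),
      ‖((2:ℝ) • proj (f k) x - x) - z‖ ^ 2 ≤ ‖x - z‖ ^ 2 - 4 * ε * ‖x - proj (f k) x‖)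
    (n : ℕ) (x : H) :
    ‖drS proj r f n x - z‖ ^ 2 ≤ ‖x - z‖ ^ 2 - 4 * (ε / 2) * drGap proj r f n x
      ∧ ‖drS proj r f n x - x‖ ≤ 2 * drGap proj r f n x := by
  set g : ℕ → H → H := fun j y => (2 : ℝ) • proj (f ((r - 1) * n + j)) y - y with hg
  set gap : ℕ → H → ℝ := fun k y => ‖y - proj (f ((r - 1) * n + k)) y‖ with hgapdef
  have hgap : ∀ k (y : H), 0 ≤ gap k y := fun _ _ => norm_nonneg _
  have hstep : ∀ k (y : H), ‖g k y - z‖ ^ 2 ≤ ‖y - z‖ ^ 2 - 4 * ε * gap k y :=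
    fun k y => hrefl ((r - 1) * n + k) y
  have hch := chain_key hstep (refl_move proj r f n) x r
  have hmv := chain_move (gap := gap) (refl_move proj r f n) x r
  have hGdef : drGap proj r f n x = ∑ k ∈ Finset.range r, gap k (compSeq k g x) := rfl
  set w := compSeq r g x with hw
  have hSz : drS proj r f n x - z = (2⁻¹ : ℝ) • ((x - z) + (w - z)) := by
    simp only [drS, hw, hg]; module
  have hSx : drS proj r f n x - x = (2⁻¹ : ℝ) • (w - x) := by
    simp only [drS, hw, hg]; module
  constructor
  · rw [hSz, norm_smul, Real.norm_eq_abs]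
    have habs : |(2⁻¹:ℝ)| = 2⁻¹ := by norm_num
    rw [habs]
    have hineq : ‖(x - z) + (w - z)‖ ^ 2 ≤ 2 * ‖x - z‖ ^ 2 + 2 * ‖w - z‖ ^ 2 := by
      rw [norm_add_sq_real]
      nlinarith [real_inner_le_norm (x - z) (w - z),
        sq_nonneg (‖x - z‖ - ‖w - z‖)]
    rw [hGdef]
    nlinarith [hch, hineq]
  · rw [hSx, norm_smul, Real.norm_eq_abs]
    have habs : |(2⁻¹:ℝ)| = 2⁻¹ := by norm_num
    rw [habs, hGdef]
    linarith [hmv, Finset.sum_nonneg (fun k (_ : k ∈ Finset.range r) => hgap k (compSeq k g x))]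

end DRAux
/-- Theorem 3.1(ii): the composite unrestricted DR operator
`Q = S_{j_f} ∘ ⋯ ∘ S_0` generates a weakly convergent sequence when the intersection has
nonempty interior. -/
theorem stmt1
    (m r : ℕ) (hr : 1 < r)
    (C : ℕ → Set H)
    (hC : ∀ i ∈ Set.Icc 1 m, (C i).Nonempty ∧ IsClosed (C i) ∧ Convex ℝ (C i))
    (hint : (interior (⋂ i ∈ Set.Icc 1 m, C i)).Nonempty)
    (proj : ℕ → H → H) (hproj : ∀ i ∈ Set.Icc 1 m, IsProjOn (C i) (proj i))
    (f : ℕ → ℕ) (hf : Set.range f = Set.Icc 1 m)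
    (jf : ℕ) (hjf : f '' Set.Icc 1 jf = Set.Icc 1 m)
    (y : ℕ → H) (hy : ∀ n, y (n + 1) = compSeq (jf + 1) (drS proj r f) (y n)) :
    ∃ p ∈ ⋂ i ∈ Set.Icc 1 m, C i, WeakConvergesTo y p := by
  have hr1 : 0 < r - 1 := by omega
  -- ball inside the intersection
  obtain ⟨z, hz⟩ := hint
  obtain ⟨ε₀, hε₀, hball₀⟩ := Metric.mem_nhds_iff.mp (mem_interior_iff_mem_nhds.mp hz)
  set ε := ε₀ / 2 with hεdef
  have hε : 0 < ε := by positivity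
  have hballC : ∀ i ∈ Set.Icc 1 m, ∀ u : H, ‖u‖ ≤ ε → z + u ∈ C i := by
    intro i hi u hu
    have hmem : z + u ∈ Metric.ball z ε₀ := by
      rw [Metric.mem_ball, dist_eq_norm, add_sub_cancel_left]
      linarith
    exact Set.mem_iInter₂.mp (hball₀ hmem) i hi
  have hfm : ∀ k, f k ∈ Set.Icc 1 m := fun k => hf ▸ Set.mem_range_self k
  -- reflection inequality, at z with margin ε
  have hrefl : ∀ k (x : H), ‖((2:ℝ) • proj (f k) x - x) - z‖ ^ 2
      ≤ ‖x - z‖ ^ 2 - 4 * ε * ‖x - proj (f k) x‖ :=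
    fun k x => refl_key (hC _ (hfm k)).2.2 (hproj _ (hfm k)) hε.le (hballC _ (hfm k)) x
  -- reflection inequality, at any point of the ball with margin 0
  have hrefl0 : ∀ v : H, ‖v‖ ≤ ε → ∀ k (x : H),
      ‖((2:ℝ) • proj (f k) x - x) - (z + v)‖ ^ 2
      ≤ ‖x - (z + v)‖ ^ 2 - 4 * 0 * ‖x - proj (f k) x‖ := by
    intro v hv k x
    refine refl_key (hC _ (hfm k)).2.2 (hproj _ (hfm k)) le_rfl ?_ x
    intro u hu
    have hu0 : u = 0 := norm_le_zero_iff.mp hu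
    rw [hu0, add_zero]
    exact hballC _ (hfm k) v hv
  set S := drS proj r f with hS
  -- Q-level bounds
  have hQstep : ∀ n (x : H), ‖S n x - z‖ ^ 2
      ≤ ‖x - z‖ ^ 2 - 4 * (ε / 2) * drGap proj r f n x :=
    fun n x => (drS_key proj r f hrefl n x).1
  have hQmove : ∀ n (x : H), ‖S n x - x‖ ≤ 2 * drGap proj r f n x :=
    fun n x => (drS_key proj r f hrefl n x).2
  set G : ℕ → ℝ := fun n =>
    ∑ n' ∈ Finset.range (jf + 1), drGap proj r f n' (compSeq n' S (y n)) with hGdef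
  have hGnn : ∀ n, 0 ≤ G n :=
    fun n => Finset.sum_nonneg fun n' _ => drGap_nonneg proj r f n' _
  -- decrease at z
  have hdecr : ∀ n, ‖y (n + 1) - z‖ ^ 2 ≤ ‖y n - z‖ ^ 2 - 2 * ε * G n := by
    intro n
    have h := chain_key (gap := fun n' x => drGap proj r f n' x) hQstep hQmove (y n) (jf + 1)
    rw [hy n]
    have h42 : 4 * (ε / 2) * G n = 2 * ε * G n := by ring
    rw [hGdef]
    simp only at h ⊢
    linarith [h, h42]
  have hmono : ∀ n, ‖y (n + 1) - z‖ ^ 2 ≤ ‖y n - z‖ ^ 2 := by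
    intro n
    have := mul_nonneg (by linarith : (0:ℝ) ≤ 2 * ε) (hGnn n)
    linarith [hdecr n]
  -- Fejér monotonicity with respect to the ball
  have hFej : ∀ v : H, ‖v‖ ≤ ε → ∀ n,
      ‖y (n + 1) - (z + v)‖ ^ 2 ≤ ‖y n - (z + v)‖ ^ 2 := by
    intro v hv n
    have hstep0 : ∀ n' (x : H), ‖S n' x - (z + v)‖ ^ 2
        ≤ ‖x - (z + v)‖ ^ 2 - 4 * (0 / 2) * drGap proj r f n' x :=
      fun n' x => (drS_key proj r f (hrefl0 v hv) n' x).1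
    have h := chain_key (gap := fun n' x => drGap proj r f n' x) hstep0 hQmove (y n) (jf + 1)
    rw [hy n]
    have : 4 * ((0:ℝ) / 2) * ∑ k ∈ Finset.range (jf + 1),
        drGap proj r f k (compSeq k S (y n)) = 0 := by ring
    linarith [h, this.le, this.ge]
  -- step-length bound from Fejér monotonicity over the ball
  have hstepnorm : ∀ n, 2 * ε * ‖y (n + 1) - y n‖
      ≤ ‖y n - z‖ ^ 2 - ‖y (n + 1) - z‖ ^ 2 := by
    intro n
    by_cases h0 : y (n + 1) - y n = 0
    · rw [h0, norm_zero, mul_zero]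
      linarith [hmono n]
    · set δ := y (n + 1) - y n with hδdef
      have hδ : 0 < ‖δ‖ := norm_pos_iff.2 h0
      set v := (-(ε / ‖δ‖)) • δ with hvdef
      have hv : ‖v‖ ≤ ε := by
        rw [hvdef, norm_smul, Real.norm_eq_abs, abs_neg, abs_of_nonneg (by positivity),
          div_mul_cancel₀ _ hδ.ne']
      have hF := hFej v hv n
      have e1 : y (n + 1) - (z + v) = (y (n + 1) - z) - v := by abel
      have e2 : y n - (z + v) = (y n - z) - v := by abel
      have eL : ‖y (n + 1) - z - v‖ ^ 2
          = ‖y (n + 1) - z‖ ^ 2 - 2 * ⟪y (n + 1) - z, v⟫ + ‖v‖ ^ 2 :=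
        norm_sub_sq_real _ _
      have eR : ‖y n - z - v‖ ^ 2
          = ‖y n - z‖ ^ 2 - 2 * ⟪y n - z, v⟫ + ‖v‖ ^ 2 :=
        norm_sub_sq_real _ _
      rw [e1, e2, eL, eR] at hF
      have hinner : ⟪y (n + 1) - z, v⟫ - ⟪y n - z, v⟫ = ⟪δ, v⟫ := by
        rw [← inner_sub_left]
        congr 1
        rw [hδdef]; abel
      have hδv : ⟪δ, v⟫ = -(ε * ‖δ‖) := by
        rw [hvdef, real_inner_smul_right, real_inner_self_eq_norm_sq]
        field_simp
      have h' : 2 * (⟪y (n + 1) - z, v⟫ - ⟪y n - z, v⟫)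
          ≥ ‖y (n + 1) - z‖ ^ 2 - ‖y n - z‖ ^ 2 := by linarith [hF]
      rw [hinner, hδv] at h'
      linarith
  -- telescoping bounds
  have htelG : ∀ N, ∑ n ∈ Finset.range N, 2 * ε * G n ≤ ‖y 0 - z‖ ^ 2 := by
    intro N
    have h1 : ∑ n ∈ Finset.range N, 2 * ε * G n
        ≤ ∑ n ∈ Finset.range N, (‖y n - z‖ ^ 2 - ‖y (n + 1) - z‖ ^ 2) :=
      Finset.sum_le_sum fun n _ => by linarith [hdecr n]
    rw [Finset.sum_range_sub' (fun n => ‖y n - z‖ ^ 2)] at h1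
    have : (0:ℝ) ≤ ‖y N - z‖ ^ 2 := by positivity
    linarith
  have htelD : ∀ N, ∑ n ∈ Finset.range N, 2 * ε * ‖y (n + 1) - y n‖ ≤ ‖y 0 - z‖ ^ 2 := by
    intro N
    have h1 : ∑ n ∈ Finset.range N, 2 * ε * ‖y (n + 1) - y n‖
        ≤ ∑ n ∈ Finset.range N, (‖y n - z‖ ^ 2 - ‖y (n + 1) - z‖ ^ 2) :=
      Finset.sum_le_sum fun n _ => hstepnorm n
    rw [Finset.sum_range_sub' (fun n => ‖y n - z‖ ^ 2)] at h1
    have : (0:ℝ) ≤ ‖y N - z‖ ^ 2 := by positivity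
    linarith
  -- G is summable, hence tends to 0
  have hGsum : Summable G := by
    refine summable_of_sum_range_le (c := ‖y 0 - z‖ ^ 2 / (2 * ε)) hGnn ?_
    intro N
    rw [le_div_iff₀ (by linarith : (0:ℝ) < 2 * ε)]
    have := htelG N
    rw [← Finset.mul_sum] at this
    linarith
  have hG0 : Tendsto G atTop (𝓝 0) := hGsum.tendsto_atTop_zero
  -- the sequence is Cauchy, hence strongly convergent
  have hsumd : Summable (fun n => dist (y n) (y (n + 1))) := by
    refine summable_of_sum_range_le (c := ‖y 0 - z‖ ^ 2 / (2 * ε))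
      (fun n => dist_nonneg) ?_
    intro N
    rw [le_div_iff₀ (by linarith : (0:ℝ) < 2 * ε)]
    have h1 := htelD N
    rw [← Finset.mul_sum] at h1
    have h2 : ∀ n, dist (y n) (y (n + 1)) = ‖y (n + 1) - y n‖ := by
      intro n; rw [dist_eq_norm, norm_sub_rev]
    simp only [h2]
    linarith
  obtain ⟨p, hp⟩ := cauchySeq_tendsto_of_complete (cauchySeq_of_summable_dist hsumd)
  -- membership of the limit in each set
  have hmem : ∀ i ∈ Set.Icc 1 m, p ∈ C i := by
    intro i hi
    rw [← hjf] at hi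
    obtain ⟨k', hk'mem, hfk'⟩ := hi
    have hi' : i ∈ Set.Icc 1 m := hfk' ▸ hfm k'
    set n'' := k' / (r - 1) with hn''def
    set kk := k' % (r - 1) with hkkdef
    have hrw : (r - 1) * n'' + kk = k' := Nat.div_add_mod k' (r - 1)
    have hn'' : n'' < jf + 1 := by
      have := Nat.div_le_self k' (r - 1)
      have := hk'mem.2
      omega
    have hkk : kk < r := by
      have := Nat.mod_lt k' hr1
      omega
    set W : ℕ → H := fun n => drW proj r f n'' kk (compSeq n'' S (y n)) with hWdef
    -- the gap at our index is dominated by G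
    have hgaple : ∀ n, ‖W n - proj i (W n)‖ ≤ G n := by
      intro n
      have h1 : ‖drW proj r f n'' kk (compSeq n'' S (y n))
          - proj (f ((r - 1) * n'' + kk)) (drW proj r f n'' kk (compSeq n'' S (y n)))‖
          ≤ drGap proj r f n'' (compSeq n'' S (y n)) :=
        Finset.single_le_sum (f := fun k =>
          ‖drW proj r f n'' k (compSeq n'' S (y n))
            - proj (f ((r - 1) * n'' + k)) (drW proj r f n'' k (compSeq n'' S (y n)))‖)
          (fun k _ => norm_nonneg _) (Finset.mem_range.mpr hkk)
      have h2 : drGap proj r f n'' (compSeq n'' S (y n)) ≤ G n :=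
        Finset.single_le_sum (f := fun n' => drGap proj r f n' (compSeq n' S (y n)))
          (fun n' _ => drGap_nonneg proj r f n' (compSeq n' S (y n)))
          (Finset.mem_range.mpr hn'')
      rw [hrw, hfk'] at h1
      exact h1.trans h2
    -- W n stays close to y n
    have hnear : ∀ n, ‖W n - y n‖ ≤ 4 * G n := by
      intro n
      have h1 : ‖compSeq n'' S (y n) - y n‖
          ≤ 2 * ∑ n' ∈ Finset.range n'', drGap proj r f n' (compSeq n' S (y n)) :=
        chain_move (gap := fun n' x => drGap proj r f n' x) hQmove (y n) n''
      have hsub : Finset.range n'' ⊆ Finset.range (jf + 1) :=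
        Finset.range_subset_range.mpr (by omega)
      have h1' : ∑ n' ∈ Finset.range n'', drGap proj r f n' (compSeq n' S (y n)) ≤ G n :=
        Finset.sum_le_sum_of_subset_of_nonneg hsub
          (fun n' _ _ => drGap_nonneg proj r f n' _)
      have h2 : ‖W n - compSeq n'' S (y n)‖
          ≤ 2 * drGap proj r f n'' (compSeq n'' S (y n)) :=
        drW_move proj r f n'' (compSeq n'' S (y n)) hkk.le
      have h2' : drGap proj r f n'' (compSeq n'' S (y n)) ≤ G n :=
        Finset.single_le_sum (f := fun n' => drGap proj r f n' (compSeq n' S (y n)))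
          (fun n' _ => drGap_nonneg proj r f n' (compSeq n' S (y n)))
          (Finset.mem_range.mpr hn'')
      have htri := dist_triangle (W n) (compSeq n'' S (y n)) (y n)
      simp only [dist_eq_norm] at htri
      linarith
    -- W n → p
    have hWy0 : Tendsto (fun n => W n - y n) atTop (𝓝 0) := by
      rw [tendsto_zero_iff_norm_tendsto_zero]
      refine squeeze_zero (fun n => norm_nonneg _) hnear ?_
      have := hG0.const_mul (4:ℝ)
      simpa using this
    have hWp : Tendsto W atTop (𝓝 p) := by
      have := hWy0.add hp
      simpa using this
    have hgap0 : Tendsto (fun n => W n - proj i (W n)) atTop (𝓝 0) := by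
      rw [tendsto_zero_iff_norm_tendsto_zero]
      exact squeeze_zero (fun n => norm_nonneg _) hgaple hG0
    have hPW : Tendsto (fun n => proj i (W n)) atTop (𝓝 p) := by
      have := hWp.sub hgap0
      simpa using this
    exact (hC i hi').2.1.mem_of_tendsto hPW
      (Filter.Eventually.of_forall fun n => (hproj i hi' (W n)).1)
  exact ⟨p, Set.mem_iInter₂.mpr hmem, fun w => hp.inner tendsto_const_nhds⟩
end

section
/- Let H be a real Hilbert space, let {C_i}_{i=1}^m be a finite family of nonempty, closed and convex subsets of H with ∩_{i=1}^m C_i ≠ ∅, let r > 1 and M be positive integers, and let f : ℕ → {1,…,m} be surjective. Suppose the sequence n ↦ {C_{m,r}(n)(j)}_{j=1}^r of r-tuples of sets is M-quasi-periodic as a mapping on ℕ (that is, for every n ∈ ℕ, the set of r-tuples {C_{m,r}(k)(j)}_{j=1}^r attained for k ∈ {n,…,n+M−1} equals the set of all r-tuples attained over k ∈ ℕ). Then the sequence (x_n) generated by x_n := S_{n−1}(x_{n−1}) from any x₀ ∈ H converges weakly to a common fixed point of the operators {S_n}_{n=0}^∞. -/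
open Filter Topology RealInnerProductSpace

variable {H : Type*} [NormedAddCommGroup H] [InnerProductSpace ℝ H] [CompleteSpace H]

section AuxLemmas

set_option linter.unusedSectionVars false

lemma isProjOn_unique' {C : Set H} {P Q : H → H} (hc : Convex ℝ C)
    (hP : IsProjOn C P) (hQ : IsProjOn C Q) : P = Q := by
  funext x
  have hp := hP x; have hq := hQ x
  have h1 : ‖x - P x‖ = ‖x - Q x‖ :=
    le_antisymm (hp.2 _ hq.1) (hq.2 _ hp.1)
  have hmid : (2⁻¹ : ℝ) • P x + (2⁻¹ : ℝ) • Q x ∈ C :=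
    hc hp.1 hq.1 (by norm_num) (by norm_num) (by norm_num)
  have h2 : ‖x - P x‖ ≤ ‖x - ((2⁻¹ : ℝ) • P x + (2⁻¹ : ℝ) • Q x)‖ := hp.2 _ hmid
  have key : x - ((2⁻¹ : ℝ) • P x + (2⁻¹ : ℝ) • Q x) = (2⁻¹ : ℝ) • ((x - P x) + (x - Q x)) := by
    module
  rw [key] at h2
  have e1 := norm_add_sq_real (x - P x) (x - Q x)
  have e2 := norm_sub_sq_real (x - P x) (x - Q x)
  have h3 : ‖(2⁻¹ : ℝ) • ((x - P x) + (x - Q x))‖ = 2⁻¹ * ‖(x - P x) + (x - Q x)‖ := by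
    rw [norm_smul]; norm_num
  have h4 : (x - P x) - (x - Q x) = Q x - P x := by abel
  rw [h4] at e2
  rw [h3] at h2
  have h5 : ‖Q x - P x‖^2 ≤ 0 := by
    nlinarith [norm_nonneg (x - P x), norm_nonneg ((x - P x) + (x - Q x))]
  have h6 : ‖Q x - P x‖ = 0 := le_antisymm (by nlinarith [norm_nonneg (Q x - P x)]) (norm_nonneg _)
  exact (sub_eq_zero.mp (norm_eq_zero.mp h6)).symm

lemma isProjOn_vi {C : Set H} {P : H → H} (hc : Convex ℝ C) (hP : IsProjOn C P)
    (x : H) {c : H} (hcC : c ∈ C) : ⟪x - P x, c - P x⟫ ≤ 0 := by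
  set u := x - P x
  set w := c - P x with hw
  have key : ∀ t : ℝ, 0 < t → t ≤ 1 → ⟪u, w⟫ ≤ t * ‖w‖^2 / 2 := by
    intro t ht h1
    have hm : P x + t • w ∈ C := by
      have := hc (hP x).1 hcC (by linarith : (0:ℝ) ≤ 1 - t) ht.le (by ring)
      convert this using 1
      rw [hw]; module
    have h2 := (hP x).2 _ hm
    have h3 : x - (P x + t • w) = u - t • w := by rw [hw]; module
    rw [h3] at h2
    have e1 := norm_sub_sq_real u (t • w)
    rw [norm_smul, real_inner_smul_right] at e1
    have h4 : ‖u‖^2 ≤ ‖u - t • w‖^2 := by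
      have := norm_nonneg (u - t • w)
      nlinarith [norm_nonneg u]
    rw [e1] at h4
    simp only [Real.norm_eq_abs, abs_of_pos ht] at h4
    nlinarith
  by_contra hlt
  push_neg at hlt
  rcases eq_or_ne (‖w‖) 0 with h0 | h0
  · have : w = 0 := norm_eq_zero.mp h0
    rw [this, inner_zero_right] at hlt; linarith
  · have hwpos : 0 < ‖w‖^2 := by positivity
    set t := min 1 (⟪u, w⟫ / ‖w‖^2) with htdef
    have ht0 : 0 < t := lt_min one_pos (by positivity)
    have ht1 : t ≤ 1 := min_le_left _ _
    have := key t ht0 ht1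
    have h7 : t * ‖w‖^2 ≤ ⟪u, w⟫ := by
      calc t * ‖w‖^2 ≤ (⟪u, w⟫ / ‖w‖^2) * ‖w‖^2 := by
            apply mul_le_mul_of_nonneg_right (min_le_right _ _) hwpos.le
        _ = ⟪u, w⟫ := by field_simp
    nlinarith

lemma proj_firm {C : Set H} {P : H → H} (hc : Convex ℝ C) (hP : IsProjOn C P)
    (x y : H) : ‖P x - P y‖^2 ≤ ⟪P x - P y, x - y⟫ := by
  have h1 := isProjOn_vi hc hP x (hP y).1
  have h2 := isProjOn_vi hc hP y (hP x).1
  have e1 : ⟪x - P x, P y - P x⟫ + ⟪y - P y, P x - P y⟫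
      = ‖P x - P y‖^2 - ⟪P x - P y, x - y⟫ := by
    rw [← real_inner_self_eq_norm_sq]
    simp only [inner_sub_left, inner_sub_right]
    linarith [real_inner_comm x (P y), real_inner_comm x (P x), real_inner_comm y (P x),
      real_inner_comm y (P y), real_inner_comm (P x) (P y), real_inner_comm x y]
  linarith

lemma refl_nonexpansive {C : Set H} {P : H → H} (hc : Convex ℝ C) (hP : IsProjOn C P) :
    Nonexpansive (fun y => (2:ℝ) • P y - y) := by
  intro a b
  have hf := proj_firm hc hP a b
  simp only
  have key : (2:ℝ) • P a - a - ((2:ℝ) • P b - b) = (2:ℝ) • (P a - P b) - (a - b) := by module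
  rw [key]
  have e1 := norm_sub_sq_real ((2:ℝ) • (P a - P b)) (a - b)
  rw [norm_smul, real_inner_smul_left] at e1
  simp only [Real.norm_ofNat] at e1
  have h2 : ‖(2:ℝ) • (P a - P b) - (a - b)‖^2 ≤ ‖a - b‖^2 := by nlinarith
  have := norm_nonneg ((2:ℝ) • (P a - P b) - (a - b))
  nlinarith [norm_nonneg (a - b)]

lemma compSeq_nonexpansive {g : ℕ → H → H} (n : ℕ) (h : ∀ j < n, Nonexpansive (g j)) :
    Nonexpansive (compSeq n g) := by
  induction n with
  | zero => intro a b; simp [compSeq]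
  | succ k ih =>
    intro a b
    calc ‖compSeq (k+1) g a - compSeq (k+1) g b‖
        = ‖g k (compSeq k g a) - g k (compSeq k g b)‖ := rfl
      _ ≤ ‖compSeq k g a - compSeq k g b‖ := h k (Nat.lt_succ_self k) _ _
      _ ≤ ‖a - b‖ := ih (fun j hj => h j (hj.trans (Nat.lt_succ_self k))) a b

lemma compSeq_fixed {g : ℕ → H → H} {z : H} (n : ℕ) (h : ∀ j < n, g j z = z) :
    compSeq n g z = z := by
  induction n with
  | zero => rfl
  | succ k ih =>
    have : compSeq (k+1) g z = g k (compSeq k g z) := rfl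
    rw [this, ih (fun j hj => h j (hj.trans (Nat.lt_succ_self k))), h k (Nat.lt_succ_self k)]

lemma compSeq_congr' {α : Type*} {g g' : ℕ → α → α} (n : ℕ) (h : ∀ j < n, g j = g' j) :
    compSeq n g = compSeq n g' := by
  induction n with
  | zero => rfl
  | succ k ih =>
    show g k ∘ compSeq k g = g' k ∘ compSeq k g'
    rw [h k (Nat.lt_succ_self k), ih (fun j hj => h j (hj.trans (Nat.lt_succ_self k)))]

lemma dr_nonexpansive {N : H → H} (hN : Nonexpansive N) :
    Nonexpansive (fun x => (2⁻¹:ℝ) • (x + N x)) := by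
  intro a b
  simp only
  have key : (2⁻¹:ℝ) • (a + N a) - (2⁻¹:ℝ) • (b + N b)
      = (2⁻¹:ℝ) • ((a - b) + (N a - N b)) := by module
  rw [key, norm_smul]
  have := norm_add_le (a - b) (N a - N b)
  have := hN a b
  simp only [Real.norm_eq_abs]
  rw [abs_of_pos (by norm_num : (0:ℝ) < 2⁻¹)]
  linarith

lemma dr_key_ineq {N : H → H} (hN : Nonexpansive N) {q : H} (hq : N q = q) (x : H) :
    ‖(2⁻¹:ℝ) • (x + N x) - q‖^2 + ‖(2⁻¹:ℝ) • (x + N x) - x‖^2 ≤ ‖x - q‖^2 := by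
  have h1 : (2⁻¹:ℝ) • (x + N x) - q = (2⁻¹:ℝ) • ((x - q) + (N x - q)) := by module
  have h2 : (2⁻¹:ℝ) • (x + N x) - x = (2⁻¹:ℝ) • ((N x - q) - (x - q)) := by module
  have hv : ‖N x - q‖ ≤ ‖x - q‖ := by
    calc ‖N x - q‖ = ‖N x - N q‖ := by rw [hq]
      _ ≤ ‖x - q‖ := hN x q
  rw [h1, h2, norm_smul, norm_smul]
  have e1 := norm_add_sq_real (x - q) (N x - q)
  have e2 := norm_sub_sq_real (N x - q) (x - q)
  simp only [Real.norm_eq_abs]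
  rw [abs_of_pos (by norm_num : (0:ℝ) < 2⁻¹)]
  have := real_inner_comm (x - q) (N x - q)
  nlinarith [norm_nonneg (x - q), norm_nonneg (N x - q)]

lemma demiclosed {T : H → H} (hT : Nonexpansive T) {U : Filter ℕ} [U.NeBot] {y : ℕ → H}
    {p : H} (B : ℝ) (hb : ∀ k, ‖y k - p‖ ≤ B)
    (hw : ∀ w : H, Tendsto (fun k => ⟪y k - p, w⟫) U (𝓝 0))
    (he : Tendsto (fun k => ‖y k - T (y k)‖) U (𝓝 0)) : T p = p := by
  set c := p - T p with hc
  have key : ∀ k, ‖c‖^2 ≤ ‖y k - T (y k)‖^2 + 2*B*‖y k - T (y k)‖ - 2*⟪y k - p, c⟫ := by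
    intro k
    have h1 : y k - T p = (y k - p) + c := by rw [hc]; abel
    have e1 := norm_add_sq_real (y k - p) c
    rw [← h1] at e1
    have h2 : ‖y k - T p‖ ≤ ‖y k - T (y k)‖ + ‖y k - p‖ := by
      calc ‖y k - T p‖ ≤ ‖y k - T (y k)‖ + ‖T (y k) - T p‖ := by
            have := norm_add_le (y k - T (y k)) (T (y k) - T p)
            simpa [sub_add_sub_cancel] using this
        _ ≤ ‖y k - T (y k)‖ + ‖y k - p‖ := by linarith [hT (y k) p]
    have h3 : ‖y k - T p‖^2 ≤ (‖y k - T (y k)‖ + ‖y k - p‖)^2 :=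
      pow_le_pow_left₀ (norm_nonneg _) h2 2
    nlinarith [hb k, norm_nonneg (y k - T (y k)), norm_nonneg (y k - p)]
  have hlim : Tendsto (fun k => ‖y k - T (y k)‖^2 + 2*B*‖y k - T (y k)‖ - 2*⟪y k - p, c⟫)
      U (𝓝 0) := by
    have h1 := (he.pow 2).add (he.const_mul (2*B))
    have h2 := (hw c).const_mul 2
    have := h1.sub h2
    simpa using this
  have h0 : ‖c‖^2 ≤ 0 := ge_of_tendsto hlim (Eventually.of_forall key)
  have h6 : ‖c‖ = 0 := le_antisymm (by nlinarith [norm_nonneg c]) (norm_nonneg _)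
  have h7 := norm_eq_zero.mp h6
  rw [hc] at h7
  exact (sub_eq_zero.mp h7).symm

lemma exists_weak_lim {x : ℕ → H} (B : ℝ) (hb : ∀ n, ‖x n‖ ≤ B) (U : Ultrafilter ℕ) :
    ∃ p : H, ∀ y, Tendsto (fun n => ⟪x n, y⟫) (U : Filter ℕ) (𝓝 ⟪p, y⟫) := by
  have hex : ∀ y : H, ∃ c : ℝ, Tendsto (fun n => ⟪x n, y⟫) (U : Filter ℕ) (𝓝 c) := by
    intro y
    have hcomp : IsCompact (Set.Icc (-(B*‖y‖)) (B*‖y‖)) := isCompact_Icc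
    have hmem : ∀ n, ⟪x n, y⟫ ∈ Set.Icc (-(B*‖y‖)) (B*‖y‖) := by
      intro n
      have h1 := abs_real_inner_le_norm (x n) y
      have h2 : ‖x n‖ * ‖y‖ ≤ B * ‖y‖ := mul_le_mul_of_nonneg_right (hb n) (norm_nonneg y)
      have := abs_le.mp (h1.trans h2)
      exact ⟨this.1, this.2⟩
    have hle : (Ultrafilter.map (fun n => ⟪x n, y⟫) U : Filter ℝ)
        ≤ 𝓟 (Set.Icc (-(B*‖y‖)) (B*‖y‖)) := by
      rw [Filter.le_principal_iff]
      exact Filter.mem_map.mpr (Filter.Eventually.of_forall hmem)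
    obtain ⟨c, _, hc⟩ := hcomp.ultrafilter_le_nhds _ hle
    exact ⟨c, hc⟩
  choose L hL using hex
  have hadd : ∀ y z : H, L (y + z) = L y + L z := by
    intro y z
    refine tendsto_nhds_unique (hL (y + z)) ?_
    have := (hL y).add (hL z)
    simpa [inner_add_right] using this
  have hsmul : ∀ (r : ℝ) (y : H), L (r • y) = r * L y := by
    intro r y
    refine tendsto_nhds_unique (hL (r • y)) ?_
    have := (hL y).const_mul r
    simpa [real_inner_smul_right, mul_comm] using this
  have hbound : ∀ y : H, ‖L y‖ ≤ B * ‖y‖ := by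
    intro y
    rw [Real.norm_eq_abs, abs_le]
    constructor
    · apply ge_of_tendsto (hL y)
      apply Eventually.of_forall
      intro n
      have h1 := abs_le.mp ((abs_real_inner_le_norm (x n) y).trans
        (mul_le_mul_of_nonneg_right (hb n) (norm_nonneg y)))
      exact h1.1
    · apply le_of_tendsto (hL y)
      apply Eventually.of_forall
      intro n
      have h1 := abs_le.mp ((abs_real_inner_le_norm (x n) y).trans
        (mul_le_mul_of_nonneg_right (hb n) (norm_nonneg y)))
      exact h1.2
  let ℓ : H →L[ℝ] ℝ := LinearMap.mkContinuous
    { toFun := L, map_add' := hadd, map_smul' := hsmul } B hbound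
  refine ⟨(InnerProductSpace.toDual ℝ H).symm ℓ, fun y => ?_⟩
  have : ⟪(InnerProductSpace.toDual ℝ H).symm ℓ, y⟫ = ℓ y := by
    rw [← InnerProductSpace.toDual_apply_apply]
    simp
  rw [this]
  exact hL y

lemma norm_sub_le_sum_Ico (x : ℕ → H) (a b : ℕ) (h : a ≤ b) :
    ‖x b - x a‖ ≤ ∑ i ∈ Finset.Ico a b, ‖x (i+1) - x i‖ := by
  induction b, h using Nat.le_induction with
  | base => simp
  | succ b hb ih =>
    rw [Finset.sum_Ico_succ_top hb]
    calc ‖x (b+1) - x a‖ ≤ ‖x (b+1) - x b‖ + ‖x b - x a‖ := by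
          have := norm_add_le (x (b+1) - x b) (x b - x a)
          simpa [sub_add_sub_cancel] using this
      _ ≤ _ := by linarith

end AuxLemmas

/-- Theorem 3.2(i): the M-quasi-periodic unrestricted DR algorithm converges
weakly to a common fixed point of the operators `S_n`. -/
theorem stmt2
    (m r M : ℕ) (hr : 1 < r) (hM : 0 < M)
    (C : ℕ → Set H)
    (hC : ∀ i ∈ Set.Icc 1 m, (C i).Nonempty ∧ IsClosed (C i) ∧ Convex ℝ (C i))
    (hne : (⋂ i ∈ Set.Icc 1 m, C i).Nonempty)
    (proj : ℕ → H → H) (hproj : ∀ i ∈ Set.Icc 1 m, IsProjOn (C i) (proj i))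
    (f : ℕ → ℕ) (hf : Set.range f = Set.Icc 1 m)
    (hqp : ∀ n : ℕ,
      (fun k : ℕ => fun j : Fin r => C (f ((r - 1) * k + (j : ℕ)))) '' Set.Ico n (n + M) =
        Set.range fun k : ℕ => fun j : Fin r => C (f ((r - 1) * k + (j : ℕ))))
    (x : ℕ → H) (hx : ∀ n, x (n + 1) = drS proj r f n (x n)) :
    ∃ p, (∀ n : ℕ, drS proj r f n p = p) ∧ WeakConvergesTo x p := by
  classical
  obtain ⟨z, hz⟩ := hne
  have hfm : ∀ k, f k ∈ Set.Icc 1 m := fun k => hf ▸ Set.mem_range_self k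
  have hCcv : ∀ k, Convex ℝ (C (f k)) := fun k => (hC _ (hfm k)).2.2
  have hPk : ∀ k, IsProjOn (C (f k)) (proj (f k)) := fun k => hproj _ (hfm k)
  have hzC : ∀ k, z ∈ C (f k) := fun k => Set.mem_iInter₂.mp hz (f k) (hfm k)
  -- the inner nonexpansive part of each drS
  set N : ℕ → H → H :=
    fun n => compSeq r (fun j y => (2 : ℝ) • proj (f ((r - 1) * n + j)) y - y) with hN
  have hdr : ∀ n xx, drS proj r f n xx = (2⁻¹:ℝ) • (xx + N n xx) := fun n xx => rfl
  have hNnon : ∀ n, Nonexpansive (N n) :=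
    fun n => compSeq_nonexpansive r (fun j _ => refl_nonexpansive (hCcv _) (hPk _))
  have hSnon : ∀ n, Nonexpansive (drS proj r f n) := by
    intro n
    have := dr_nonexpansive (hNnon n)
    intro a b; rw [hdr, hdr]; exact this a b
  -- z is a common fixed point
  have hprojz : ∀ k, proj (f k) z = z := by
    intro k
    have h1 := (hPk k z).2 z (hzC k)
    simp only [sub_self, norm_zero] at h1
    have := norm_nonneg (z - proj (f k) z)
    have h2 : ‖z - proj (f k) z‖ = 0 := le_antisymm h1 this
    have := norm_eq_zero.mp h2
    exact (sub_eq_zero.mp this).symm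
  have hNz : ∀ n, N n z = z := by
    intro n
    apply compSeq_fixed
    intro j _
    simp only [hprojz]
    rw [two_smul]; abel
  have hSz : ∀ n, drS proj r f n z = z := by
    intro n
    rw [hdr, hNz, ← two_smul ℝ z, smul_smul]
    norm_num
  -- from a common fixed point of drS, fixed point of N
  have hNfix : ∀ n q, drS proj r f n q = q → N n q = q := by
    intro n q h
    rw [hdr] at h
    have h2 : (2:ℝ) • ((2⁻¹:ℝ) • (q + N n q)) = (2:ℝ) • q := by rw [h]
    rw [smul_smul] at h2
    norm_num at h2
    have : q + N n q = q + q := by rw [h2, two_smul]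
    exact add_left_cancel this
  -- Fejér monotonicity
  have hmono : ∀ q, (∀ n, drS proj r f n q = q) → Antitone (fun n => ‖x n - q‖) := by
    intro q hq
    apply antitone_nat_of_succ_le
    intro n
    calc ‖x (n+1) - q‖ = ‖drS proj r f n (x n) - drS proj r f n q‖ := by rw [hx n, hq n]
      _ ≤ ‖x n - q‖ := hSnon n _ _
  set B : ℝ := ‖x 0 - z‖ + ‖z‖ with hBdef
  have hB : ∀ n, ‖x n‖ ≤ B := by
    intro n
    calc ‖x n‖ = ‖(x n - z) + z‖ := by rw [sub_add_cancel]
      _ ≤ ‖x n - z‖ + ‖z‖ := norm_add_le _ _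
      _ ≤ ‖x 0 - z‖ + ‖z‖ := by
          have := hmono z hSz (Nat.zero_le n)
          linarith
  -- limits of ‖x n - q‖^2 for common fixed points q
  have hlimsq : ∀ q, (∀ n, drS proj r f n q = q) →
      ∃ L, Tendsto (fun n => ‖x n - q‖^2) atTop (𝓝 L) := by
    intro q hq
    have ha := hmono q hq
    have hbdd : BddBelow (Set.range fun n => ‖x n - q‖) :=
      ⟨0, by rintro _ ⟨n, rfl⟩; exact norm_nonneg _⟩
    have := tendsto_atTop_ciInf ha hbdd
    exact ⟨_, this.pow 2⟩
  -- differences go to zero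
  set d : ℕ → ℝ := fun n => ‖x (n+1) - x n‖ with hddef
  have hd : Tendsto d atTop (𝓝 0) := by
    obtain ⟨L, hL⟩ := hlimsq z hSz
    have hkey : ∀ n, d n ^2 ≤ ‖x n - z‖^2 - ‖x (n+1) - z‖^2 := by
      intro n
      have h := dr_key_ineq (hNnon n) (hNz n) (x n)
      rw [← hdr, ← hx n] at h
      simp only [hddef]
      linarith
    have hd2 : Tendsto (fun n => d n ^2) atTop (𝓝 0) := by
      apply squeeze_zero (fun n => sq_nonneg _) hkey ?_ |>.mono_left le_rfl
      have h2 : Tendsto (fun n => ‖x (n+1) - z‖^2) atTop (𝓝 L) :=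
        hL.comp (tendsto_add_atTop_nat 1)
      have := hL.sub h2
      simpa using this
    have heq : (fun n => Real.sqrt (d n ^2)) = d := by
      funext n; exact Real.sqrt_sq (norm_nonneg _)
    have h9 : Tendsto (fun n => Real.sqrt (d n ^ 2)) atTop (𝓝 (Real.sqrt 0)) :=
      (Real.continuous_sqrt.tendsto 0).comp hd2
    rw [Real.sqrt_zero] at h9
    exact heq ▸ h9
  -- sums of M consecutive differences go to zero
  set D : ℕ → ℝ := fun k => ∑ i ∈ Finset.range M, d (k + i) with hDdef
  have hD : Tendsto D atTop (𝓝 0) := by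
    have : Tendsto (fun k => ∑ i ∈ Finset.range M, d (k + i)) atTop
        (𝓝 (∑ _i ∈ Finset.range M, (0:ℝ))) := by
      apply tendsto_finset_sum
      intro i _
      exact hd.comp (tendsto_add_atTop_nat i)
    simpa using this
  have hDbound : ∀ k s, k ≤ s → s ≤ k + M → ‖x s - x k‖ ≤ D k := by
    intro k s h1 h2
    calc ‖x s - x k‖ ≤ ∑ i ∈ Finset.Ico k s, d i := norm_sub_le_sum_Ico x k s h1
      _ ≤ ∑ i ∈ Finset.Ico k (k+M), d i := by
          apply Finset.sum_le_sum_of_subset_of_nonneg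
          · exact Finset.Ico_subset_Ico le_rfl h2
          · intro i _ _; exact norm_nonneg _
      _ = D k := by
          rw [hDdef]
          rw [Finset.sum_Ico_eq_sum_range]
          simp
  -- the main claim, for an arbitrary ultrafilter refining atTop
  have claim : ∀ V : Ultrafilter ℕ, (V : Filter ℕ) ≤ atTop →
      ∃ p, (∀ n, drS proj r f n p = p) ∧
        ∀ y, Tendsto (fun n => ⟪x n, y⟫) (V : Filter ℕ) (𝓝 ⟪p, y⟫) := by
    intro V hV
    obtain ⟨p, hp⟩ := exists_weak_lim B hB V
    refine ⟨p, ?_, hp⟩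
    intro n
    -- choose, in each window, an index whose tuple of sets coincides with that of n
    have hσex : ∀ k : ℕ, ∃ s : ℕ, (k ≤ s ∧ s < k + M) ∧
        (fun j : Fin r => C (f ((r - 1) * s + (j : ℕ))))
          = (fun j : Fin r => C (f ((r - 1) * n + (j : ℕ)))) := by
      intro k
      have ht : (fun j : Fin r => C (f ((r - 1) * n + (j : ℕ)))) ∈
          Set.range (fun k : ℕ => fun j : Fin r => C (f ((r - 1) * k + (j : ℕ)))) := ⟨n, rfl⟩
      rw [← hqp k] at ht
      obtain ⟨s, hs, hts⟩ := ht
      exact ⟨s, ⟨hs.1, hs.2⟩, hts⟩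
    choose σ hσ1 hσ2 using hσex
    -- the operators at σ k and n coincide
    have hSeq : ∀ k, drS proj r f (σ k) = drS proj r f n := by
      intro k
      funext xx
      rw [hdr, hdr]
      have hc : compSeq r (fun j y => (2 : ℝ) • proj (f ((r - 1) * σ k + j)) y - y)
          = compSeq r (fun j y => (2 : ℝ) • proj (f ((r - 1) * n + j)) y - y) := by
        apply compSeq_congr'
        intro j hj
        have hsets : C (f ((r - 1) * σ k + j)) = C (f ((r - 1) * n + j)) :=
          congrFun (hσ2 k) ⟨j, hj⟩
        have hP1 : IsProjOn (C (f ((r - 1) * n + j))) (proj (f ((r - 1) * σ k + j))) := by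
          rw [← hsets]; exact hPk _
        have := isProjOn_unique' (hCcv ((r - 1) * n + j)) hP1 (hPk ((r - 1) * n + j))
        rw [this]
      have hcx : N (σ k) = N n := hc
      rw [hcx]
    -- apply demiclosedness
    have hσtop : Tendsto σ atTop atTop :=
      tendsto_atTop_mono (fun k => (hσ1 k).1) tendsto_id
    apply demiclosed (hSnon n) (B + ‖p‖) (y := fun k => x (σ k)) (U := (V : Filter ℕ))
    · intro k
      calc ‖x (σ k) - p‖ ≤ ‖x (σ k)‖ + ‖p‖ := norm_sub_le _ _
        _ ≤ B + ‖p‖ := by linarith [hB (σ k)]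
    · intro w
      have hb1 : ∀ k, ‖⟪x (σ k) - x k, w⟫‖ ≤ D k * ‖w‖ := by
        intro k
        calc ‖⟪x (σ k) - x k, w⟫‖ ≤ ‖x (σ k) - x k‖ * ‖w‖ := by
              rw [Real.norm_eq_abs]; exact abs_real_inner_le_norm _ _
          _ ≤ D k * ‖w‖ := by
              apply mul_le_mul_of_nonneg_right _ (norm_nonneg w)
              exact hDbound k (σ k) (hσ1 k).1 (hσ1 k).2.le
      have h1 : Tendsto (fun k => ⟪x (σ k) - x k, w⟫) atTop (𝓝 0) :=
        squeeze_zero_norm hb1 (by simpa using hD.mul_const ‖w‖)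
      have h2 : Tendsto (fun k => ⟪x k, w⟫ - ⟪p, w⟫) (V : Filter ℕ) (𝓝 0) := by
        have := (hp w).sub_const ⟪p, w⟫
        simpa using this
      have h5 := (h1.mono_left hV).add h2
      simp only [add_zero] at h5
      apply h5.congr
      intro k
      simp only [inner_sub_left]
      ring
    · have h3 : ∀ k, ‖x (σ k) - drS proj r f n (x (σ k))‖ = d (σ k) := by
        intro k
        rw [← hSeq k, ← hx (σ k), hddef]
        simp only
        rw [norm_sub_rev]
      have h4 : Tendsto (fun k => d (σ k)) atTop (𝓝 0) := hd.comp hσtop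
      have := h4.mono_left hV
      apply this.congr
      intro k
      exact (h3 k).symm
  -- conclude
  obtain ⟨p, hpfix, hpw⟩ := claim (Ultrafilter.of atTop) (Ultrafilter.of_le atTop)
  refine ⟨p, hpfix, ?_⟩
  intro y
  rw [Filter.tendsto_iff_ultrafilter]
  intro V hV
  obtain ⟨p', hp'fix, hp'w⟩ := claim V hV
  obtain ⟨Lp, hLp⟩ := hlimsq p hpfix
  obtain ⟨Lq, hLq⟩ := hlimsq p' hp'fix
  have he : ∀ n, ⟪x n, p - p'⟫
      = (‖p‖^2 - ‖p'‖^2 - (‖x n - p‖^2 - ‖x n - p'‖^2))/2 := by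
    intro n
    have e1 := norm_sub_sq_real (x n) p
    have e2 := norm_sub_sq_real (x n) p'
    rw [inner_sub_right]
    linarith
  set c : ℝ := (‖p‖^2 - ‖p'‖^2 - (Lp - Lq))/2 with hcdef
  have hT : Tendsto (fun n => ⟪x n, p - p'⟫) atTop (𝓝 c) := by
    have h1 : Tendsto (fun n => (‖p‖^2 - ‖p'‖^2 - (‖x n - p‖^2 - ‖x n - p'‖^2))/2)
        atTop (𝓝 c) := by
      rw [hcdef]
      exact ((tendsto_const_nhds.sub (hLp.sub hLq)).div_const 2)
    apply h1.congr
    intro n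
    exact (he n).symm
  have h1 : ⟪p, p - p'⟫ = c :=
    tendsto_nhds_unique (hpw (p - p')) (hT.mono_left (Ultrafilter.of_le atTop))
  have h2 : ⟪p', p - p'⟫ = c :=
    tendsto_nhds_unique (hp'w (p - p')) (hT.mono_left hV)
  have h3 : ⟪p - p', p - p'⟫ = 0 := by
    rw [inner_sub_left]; linarith
  have h4 : p' = p := by
    have := inner_self_eq_zero.mp h3
    rw [sub_eq_zero] at this
    exact this.symm
  rw [← h4]
  exact hp'w y
end

section
/- Let H be a real Hilbert space, let {C_i}_{i=1}^m be a finite family of nonempty, closed and convex subsets of H with int ∩_{i=1}^m C_i ≠ ∅, let r > 1 and M be positive integers, and let f : ℕ → {1,…,m} be surjective. Suppose the sequence n ↦ {C_{m,r}(n)(j)}_{j=1}^r of r-tuples of sets is M-quasi-periodic as a mapping on ℕ. Then the sequence (x_n) generated by x_n := S_{n−1}(x_{n−1}) from any x₀ ∈ H converges weakly to a point x_* ∈ ∩_{i=1}^m C_i. -/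
open Filter Topology RealInnerProductSpace

variable {H : Type*} [NormedAddCommGroup H] [InnerProductSpace ℝ H] [CompleteSpace H]

set_option maxHeartbeats 1000000

section Aux
set_option linter.unusedSectionVars false

lemma proj_inner_le {C : Set H} {P : H → H} (hconv : Convex ℝ C)
    (hP : IsProjOn C P) (x : H) {w : H} (hw : w ∈ C) :
    ⟪x - P x, w - P x⟫ ≤ 0 := by
  have hPx := (hP x).1
  have hmin : ‖x - P x‖ = ⨅ w : C, ‖x - w‖ := by
    haveI : Nonempty C := ⟨⟨P x, hPx⟩⟩
    refine le_antisymm (le_ciInf fun w => (hP x).2 w w.2) ?_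
    have hbdd : BddBelow (Set.range fun w : C => ‖x - (w:H)‖) :=
      ⟨0, by rintro _ ⟨w, rfl⟩; exact norm_nonneg _⟩
    exact ciInf_le hbdd ⟨P x, hPx⟩
  exact (norm_eq_iInf_iff_real_inner_le_zero hconv hPx).1 hmin w hw

lemma refl_sq_eq (P : H → H) (x w : H) :
    ‖(2:ℝ) • P x - x - w‖^2 = ‖x - w‖^2 - 4 * ⟪x - P x, P x - w⟫ := by
  have h1 : (2:ℝ) • P x - x - w = (P x - w) - (x - P x) := by
    rw [two_smul]; abel
  have h2 : x - w = (x - P x) + (P x - w) := by abel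
  rw [h1, h2, norm_sub_sq_real, norm_add_sq_real, real_inner_comm]
  ring

lemma inner_ge_of_ball {C : Set H} {P : H → H} (hconv : Convex ℝ C)
    (hP : IsProjOn C P) {z : H} {ε : ℝ} (hε : 0 < ε)
    (hball : Metric.ball z ε ⊆ C) (x : H) :
    ε * ‖x - P x‖ ≤ ⟪x - P x, P x - z⟫ := by
  rcases eq_or_ne (x - P x) 0 with h | h
  · simp [h]
  · set d := ‖x - P x‖ with hd
    have hdpos : 0 < d := norm_pos_iff.2 h
    have key : ∀ t, 0 < t → t < ε → t * d ≤ ⟪x - P x, P x - z⟫ := by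
      intro t ht htε
      have hw : z + (t/d) • (x - P x) ∈ C := by
        apply hball
        simp only [Metric.mem_ball, dist_eq_norm, add_sub_cancel_left, norm_smul]
        rw [Real.norm_eq_abs, abs_of_pos (by positivity), ← hd]
        rw [div_mul_cancel₀ _ hdpos.ne']
        exact htε
      have := proj_inner_le hconv hP x hw
      have hexp : (z + (t/d) • (x - P x)) - P x = (z - P x) + (t/d) • (x - P x) := by abel
      rw [hexp, inner_add_right, real_inner_smul_right, real_inner_self_eq_norm_sq, ← hd] at this
      have h1 : ⟪x - P x, z - P x⟫ ≤ -(t/d * d^2) := by linarith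
      have h2 : ⟪x - P x, P x - z⟫ = -⟪x - P x, z - P x⟫ := by
        rw [← inner_neg_right]; congr 1; abel
      rw [h2]
      have : t/d * d^2 = t * d := by field_simp
      linarith [this ▸ h1]
    have h0 : (0:ℝ) ≤ ⟪x - P x, P x - z⟫ := by
      have := proj_inner_le hconv hP x (hball (Metric.mem_ball_self hε))
      have h2 : ⟪x - P x, P x - z⟫ = -⟪x - P x, z - P x⟫ := by
        rw [← inner_neg_right]; congr 1; abel
      linarith [h2 ▸ neg_nonneg.2 this]
    by_contra hcon
    push_neg at hcon
    have h3 : ⟪x - P x, P x - z⟫ / d < ε := by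
      rw [div_lt_iff₀ hdpos]; linarith [hcon]
    set s := (⟪x - P x, P x - z⟫ / d + ε) / 2 with hs
    have h5 : ⟪x - P x, P x - z⟫ / d < s := by rw [hs]; linarith
    have hspos : 0 < s := by
      have : 0 ≤ ⟪x - P x, P x - z⟫ / d := div_nonneg h0 hdpos.le
      rw [hs]; linarith
    have hsε : s < ε := by rw [hs]; linarith
    have hk := key s hspos hsε
    have h6 := mul_lt_mul_of_pos_right h5 hdpos
    rw [div_mul_cancel₀ _ hdpos.ne'] at h6
    linarith

lemma refl_step {C : Set H} {P : H → H} (hconv : Convex ℝ C)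
    (hP : IsProjOn C P) {z : H} {ε : ℝ} (hε : 0 < ε)
    (hball : Metric.ball z ε ⊆ C) (x : H) :
    ‖(2:ℝ) • P x - x - z‖^2 ≤ ‖x - z‖^2 - 4 * ε * ‖x - P x‖ := by
  rw [refl_sq_eq]
  have := inner_ge_of_ball hconv hP hε hball x
  linarith

lemma refl_fejer {C : Set H} {P : H → H} (hconv : Convex ℝ C)
    (hP : IsProjOn C P) {w : H} (hw : w ∈ C) (x : H) :
    ‖(2:ℝ) • P x - x - w‖ ≤ ‖x - w‖ := by
  have h1 := proj_inner_le hconv hP x hw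
  have h2 : ⟪x - P x, P x - w⟫ = -⟪x - P x, w - P x⟫ := by
    rw [← inner_neg_right]; congr 1; abel
  have h3 : ‖(2:ℝ) • P x - x - w‖^2 ≤ ‖x - w‖^2 := by
    rw [refl_sq_eq]; rw [h2]; linarith
  exact (pow_le_pow_iff_left₀ (norm_nonneg _) (norm_nonneg _) two_ne_zero).1 h3

lemma compSeq_sq_le (g : ℕ → H → H) (D : ℕ → H → ℝ) (z : H) (ε : ℝ)
    (hg : ∀ j y, ‖g j y - z‖^2 ≤ ‖y - z‖^2 - 4*ε*(D j y)) :
    ∀ (s : ℕ) (x : H), ‖compSeq s g x - z‖^2 ≤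
      ‖x - z‖^2 - 4*ε*∑ j ∈ Finset.range s, D j (compSeq j g x) := by
  intro s
  induction s with
  | zero => intro x; simp [compSeq]
  | succ s ih =>
    intro x
    have h1 : compSeq (s+1) g x = g s (compSeq s g x) := rfl
    rw [h1, Finset.sum_range_succ]
    have := hg s (compSeq s g x)
    have := ih x
    linarith

lemma compSeq_fejer (g : ℕ → H → H) (w : H)
    (hg : ∀ j y, ‖g j y - w‖ ≤ ‖y - w‖) :
    ∀ (s : ℕ) (x : H), ‖compSeq s g x - w‖ ≤ ‖x - w‖ := by
  intro s
  induction s with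
  | zero => intro x; simp [compSeq]
  | succ s ih =>
    intro x
    calc ‖compSeq (s+1) g x - w‖ = ‖g s (compSeq s g x) - w‖ := rfl
      _ ≤ ‖compSeq s g x - w‖ := hg s _
      _ ≤ ‖x - w‖ := ih x

end Aux

/-- Theorem 3.2(ii): the M-quasi-periodic unrestricted DR algorithm converges
weakly to a point of the intersection when the latter has nonempty interior. -/
theorem stmt3
    (m r M : ℕ) (hr : 1 < r) (hM : 0 < M)
    (C : ℕ → Set H)
    (hC : ∀ i ∈ Set.Icc 1 m, (C i).Nonempty ∧ IsClosed (C i) ∧ Convex ℝ (C i))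
    (hint : (interior (⋂ i ∈ Set.Icc 1 m, C i)).Nonempty)
    (proj : ℕ → H → H) (hproj : ∀ i ∈ Set.Icc 1 m, IsProjOn (C i) (proj i))
    (f : ℕ → ℕ) (hf : Set.range f = Set.Icc 1 m)
    (hqp : ∀ n : ℕ,
      (fun k : ℕ => fun j : Fin r => C (f ((r - 1) * k + (j : ℕ)))) '' Set.Ico n (n + M) =
        Set.range fun k : ℕ => fun j : Fin r => C (f ((r - 1) * k + (j : ℕ))))
    (x : ℕ → H) (hx : ∀ n, x (n + 1) = drS proj r f n (x n)) :
    ∃ p ∈ ⋂ i ∈ Set.Icc 1 m, C i, WeakConvergesTo x p := by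
  have hr1 : 0 < r - 1 := Nat.sub_pos_of_lt hr
  obtain ⟨z, hz⟩ := hint
  obtain ⟨ε, hε, hball⟩ := Metric.isOpen_iff.1 isOpen_interior z hz
  have hballS : Metric.ball z ε ⊆ ⋂ i ∈ Set.Icc 1 m, C i := hball.trans interior_subset
  have hfi : ∀ t, f t ∈ Set.Icc 1 m := fun t => hf ▸ Set.mem_range_self t
  have hballC : ∀ t : ℕ, Metric.ball z ε ⊆ C (f t) := fun t w hw =>
    Set.mem_iInter₂.1 (hballS hw) (f t) (hfi t)
  have hconvf : ∀ t, Convex ℝ (C (f t)) := fun t => (hC (f t) (hfi t)).2.2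
  have hPf : ∀ t, IsProjOn (C (f t)) (proj (f t)) := fun t => hproj (f t) (hfi t)
  set g : ℕ → ℕ → H → H := fun n j y => (2:ℝ) • proj (f ((r-1)*n + j)) y - y with hgdef
  set Y : ℕ → ℕ → H := fun n j => compSeq j (g n) (x n) with hYdef
  set d : ℕ → ℕ → ℝ := fun n j => ‖Y n j - proj (f ((r-1)*n + j)) (Y n j)‖ with hddef
  set a : ℕ → ℝ := fun n => ‖x n - z‖^2 with hadef
  have hxsucc : ∀ n, x (n+1) = (2⁻¹:ℝ) • (x n + compSeq r (g n) (x n)) := fun n => hx n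
  have hd0 : ∀ n j, 0 ≤ d n j := fun n j => norm_nonneg _
  have hsum0 : ∀ n, (0:ℝ) ≤ ∑ j ∈ Finset.range r, d n j :=
    fun n => Finset.sum_nonneg fun j _ => hd0 n j
  -- squared decrease with slack
  have hNle : ∀ n, ‖compSeq r (g n) (x n) - z‖^2 ≤ a n - 4*ε*∑ j ∈ Finset.range r, d n j := by
    intro n
    exact compSeq_sq_le (g n) (fun j y => ‖y - proj (f ((r-1)*n + j)) y‖) z ε
      (fun j y => refl_step (hconvf _) (hPf _) hε (hballC _) y) r (x n)
  -- Fejér for the composition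
  have hNfej : ∀ n, ∀ w ∈ Metric.ball z ε, ‖compSeq r (g n) (x n) - w‖ ≤ ‖x n - w‖ := by
    intro n w hw
    exact compSeq_fejer (g n) w
      (fun j y => refl_fejer (hconvf _) (hPf _) (hballC _ hw) y) r (x n)
  -- DR split identity
  have hsplit : ∀ n (w : H), x (n+1) - w =
      (2⁻¹:ℝ) • ((x n - w) + (compSeq r (g n) (x n) - w)) := by
    intro n w
    rw [hxsucc n]
    module
  -- Fejér monotonicity of the iterates
  have hFej : ∀ n, ∀ w ∈ Metric.ball z ε, ‖x (n+1) - w‖ ≤ ‖x n - w‖ := by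
    intro n w hw
    rw [hsplit n w, norm_smul]
    have h1 := norm_add_le (x n - w) (compSeq r (g n) (x n) - w)
    have h2 := hNfej n w hw
    rw [Real.norm_eq_abs]
    rw [abs_of_pos (by norm_num : (0:ℝ) < 2⁻¹)]
    linarith
  -- main squared inequality
  have hmain : ∀ n, a (n+1) ≤ a n - 2*ε*∑ j ∈ Finset.range r, d n j := by
    intro n
    have h1 : x (n+1) - z = (2⁻¹:ℝ) • ((x n - z) + (compSeq r (g n) (x n) - z)) := hsplit n z
    have h2 : a (n+1) = ‖x (n+1) - z‖^2 := rfl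
    rw [h2, h1, norm_smul, Real.norm_eq_abs, abs_of_pos (by norm_num : (0:ℝ) < 2⁻¹), mul_pow]
    have h3 : ‖(x n - z) + (compSeq r (g n) (x n) - z)‖^2 ≤
        2*‖x n - z‖^2 + 2*‖compSeq r (g n) (x n) - z‖^2 := by
      rw [norm_add_sq_real]
      nlinarith [real_inner_le_norm (x n - z) (compSeq r (g n) (x n) - z),
        sq_nonneg (‖x n - z‖ - ‖compSeq r (g n) (x n) - z‖)]
    have h4 := hNle n
    have h5 : a n = ‖x n - z‖^2 := rfl
    nlinarith [h3, h4]
  have hante : ∀ n, a (n+1) ≤ a n := by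
    intro n
    have := hmain n
    nlinarith [hsum0 n, hε]
  have ha0 : ∀ n, 0 ≤ a n := fun n => by positivity
  -- step-size control
  have hdelta : ∀ n, 2*ε*‖x (n+1) - x n‖ ≤ a n - a (n+1) := by
    intro n
    rcases eq_or_ne (x (n+1) - x n) 0 with h | h
    · rw [h, norm_zero, mul_zero]
      linarith [hante n]
    · set e := x (n+1) - x n with hedef
      set δ := ‖e‖ with hδdef
      have hδpos : 0 < δ := norm_pos_iff.2 h
      have key : ∀ t, 0 < t → t < ε → 2*t*δ ≤ a n - a (n+1) := by
        intro t ht htε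
        set w := z - (t/δ) • e with hwdef
        have hwball : w ∈ Metric.ball z ε := by
          simp only [hwdef, Metric.mem_ball, dist_eq_norm, sub_sub_cancel_left, norm_neg,
            norm_smul]
          rw [Real.norm_eq_abs, abs_of_pos (by positivity), ← hδdef,
            div_mul_cancel₀ _ hδpos.ne']
          exact htε
        have h1 := hFej n w hwball
        have h2 : ‖x (n+1) - w‖^2 ≤ ‖x n - w‖^2 :=
          pow_le_pow_left₀ (norm_nonneg _) h1 2
        have h3 : x (n+1) - w = (x (n+1) - z) + (t/δ) • e := by rw [hwdef]; module
        have h4 : x n - w = (x n - z) + (t/δ) • e := by rw [hwdef]; module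
        have e1 := norm_add_sq_real (x (n+1) - z) ((t/δ) • e)
        have e2 := norm_add_sq_real (x n - z) ((t/δ) • e)
        rw [h3, h4, e1, e2] at h2
        have h5 : ⟪x (n+1) - z, (t/δ) • e⟫ - ⟪x n - z, (t/δ) • e⟫ = (t/δ) * δ^2 := by
          rw [real_inner_smul_right, real_inner_smul_right, ← mul_sub, ← inner_sub_left]
          have : x (n+1) - z - (x n - z) = e := by rw [hedef]; abel
          rw [this, real_inner_self_eq_norm_sq, ← hδdef]
        have h6 : (t/δ) * δ^2 = t * δ := by field_simp
        rw [h6] at h5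
        have ha1 : a (n+1) = ‖x (n+1) - z‖^2 := rfl
        have ha2 : a n = ‖x n - z‖^2 := rfl
        rw [ha1, ha2]
        linarith [h2, h5]
      have hK0 : 0 ≤ a n - a (n+1) := by linarith [hante n]
      by_contra hcon
      push_neg at hcon
      have h3 : (a n - a (n+1)) / (2*δ) < ε := by
        rw [div_lt_iff₀ (by positivity)]; nlinarith
      set s := ((a n - a (n+1)) / (2*δ) + ε) / 2 with hs
      have h5 : (a n - a (n+1)) / (2*δ) < s := by rw [hs]; linarith
      have hspos : 0 < s := by
        have : 0 ≤ (a n - a (n+1)) / (2*δ) := div_nonneg hK0 (by positivity)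
        rw [hs]; linarith
      have hsε : s < ε := by rw [hs]; linarith
      have hk := key s hspos hsε
      have h6 := mul_lt_mul_of_pos_right h5 (by positivity : (0:ℝ) < 2*δ)
      rw [div_mul_cancel₀ _ (by positivity : (2*δ:ℝ) ≠ 0)] at h6
      nlinarith
  -- summability and strong convergence
  have hsummable : Summable (fun n => ‖x (n+1) - x n‖) := by
    apply summable_of_sum_range_le (c := a 0 / (2*ε)) (fun n => norm_nonneg _)
    intro n
    have tele : ∑ i ∈ Finset.range n, (a i - a (i+1)) = a 0 - a n :=
      Finset.sum_range_sub' a n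
    have hsum : 2*ε * ∑ i ∈ Finset.range n, ‖x (i+1) - x i‖ ≤ a 0 - a n := by
      rw [Finset.mul_sum]
      rw [← tele]
      exact Finset.sum_le_sum fun i _ => hdelta i
    rw [le_div_iff₀ (by positivity : (0:ℝ) < 2*ε)]
    have := ha0 n
    nlinarith
  have hcauchy : CauchySeq x := by
    apply cauchySeq_of_summable_dist
    simpa [dist_eq_norm'] using hsummable
  obtain ⟨p, hp⟩ := cauchySeq_tendsto_of_complete hcauchy
  -- limits
  have halim : Tendsto a atTop (𝓝 (‖p - z‖^2)) :=
    ((hp.sub tendsto_const_nhds).norm).pow 2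
  have halim' : Tendsto (fun n => a (n+1)) atTop (𝓝 (‖p - z‖^2)) :=
    halim.comp (tendsto_add_atTop_nat 1)
  have hdiff0 : Tendsto (fun n => a n - a (n+1)) atTop (𝓝 0) := by
    have := halim.sub halim'
    simpa using this
  have hsublim : Tendsto (fun n => ∑ j ∈ Finset.range r, d n j) atTop (𝓝 0) := by
    apply squeeze_zero hsum0 (g := fun n => (a n - a (n+1)) / (2*ε))
    · intro n
      rw [le_div_iff₀ (by positivity : (0:ℝ) < 2*ε)]
      have := hmain n
      nlinarith
    · simpa using hdiff0.div_const (2*ε)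
  have hdlim : ∀ j, j < r → Tendsto (fun n => d n j) atTop (𝓝 0) := by
    intro j hj
    apply squeeze_zero (fun n => hd0 n j) (fun n =>
      Finset.single_le_sum (fun i _ => hd0 n i) (Finset.mem_range.2 hj)) hsublim
  -- intermediate points converge to p
  have hYlim : ∀ j, j < r → Tendsto (fun n => Y n j) atTop (𝓝 p) := by
    intro j
    induction j with
    | zero =>
      intro _
      have : ∀ n, Y n 0 = x n := fun n => rfl
      simpa [this] using hp
    | succ j ih =>
      intro hj
      have hjr : j < r := Nat.lt_of_succ_lt hj
      have hYj := ih hjr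
      have hstep0 : Tendsto (fun n => Y n (j+1) - Y n j) atTop (𝓝 0) := by
        rw [tendsto_zero_iff_norm_tendsto_zero]
        have heq : ∀ n, ‖Y n (j+1) - Y n j‖ = 2 * d n j := by
          intro n
          have h1 : Y n (j+1) = (2:ℝ) • proj (f ((r-1)*n + j)) (Y n j) - Y n j := rfl
          rw [h1, hddef]
          have : (2:ℝ) • proj (f ((r-1)*n + j)) (Y n j) - Y n j - Y n j =
              (2:ℝ) • (proj (f ((r-1)*n + j)) (Y n j) - Y n j) := by module
          rw [this, norm_smul, Real.norm_eq_abs, abs_of_pos (by norm_num : (0:ℝ) < 2),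
            norm_sub_rev]
        simp only [heq]
        simpa using (hdlim j hjr).const_mul 2
      have := hYj.add hstep0
      simp only [add_zero] at this
      convert this using 2 with n
      abel
  have hQlim : ∀ j, j < r → Tendsto (fun n => proj (f ((r-1)*n + j)) (Y n j)) atTop (𝓝 p) := by
    intro j hj
    have hstep0 : Tendsto (fun n => proj (f ((r-1)*n + j)) (Y n j) - Y n j) atTop (𝓝 0) := by
      rw [tendsto_zero_iff_norm_tendsto_zero]
      have heq : ∀ n, ‖proj (f ((r-1)*n + j)) (Y n j) - Y n j‖ = d n j := by
        intro n; rw [hddef, norm_sub_rev]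
      simp only [heq]
      exact hdlim j hj
    have := (hYlim j hj).add hstep0
    simp only [add_zero] at this
    convert this using 2 with n
    abel
  -- the limit is in every C i
  have hpmem : ∀ i ∈ Set.Icc 1 m, p ∈ C i := by
    intro i hi
    have hi' : i ∈ Set.range f := by rw [hf]; exact hi
    obtain ⟨t, ht⟩ := hi'
    set j₀ := t % (r-1) with hj₀def
    set k₀ := t / (r-1) with hk₀def
    have hj₀ : j₀ < r := lt_of_lt_of_le (Nat.mod_lt t hr1) (Nat.sub_le r 1)
    have ht' : (r-1)*k₀ + j₀ = t := Nat.div_add_mod t (r-1)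
    have hrange : ∀ n, ∃ k, (n ≤ k ∧ k < n + M) ∧ C (f ((r-1)*k + j₀)) = C i := by
      intro n
      have hmem : (fun j : Fin r => C (f ((r-1)*k₀ + (j:ℕ)))) ∈
          (fun k : ℕ => fun j : Fin r => C (f ((r-1)*k + (j:ℕ)))) '' Set.Ico n (n+M) := by
        rw [hqp n]; exact Set.mem_range_self k₀
      obtain ⟨k, hk, hkeq⟩ := hmem
      refine ⟨k, ⟨hk.1, hk.2⟩, ?_⟩
      have h := congrFun hkeq ⟨j₀, hj₀⟩
      simp only at h
      rw [h, ht', ht]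
    choose K hK1 hKeq using hrange
    have hKtop : Tendsto K atTop atTop :=
      tendsto_atTop_mono (fun n => (hK1 n).1) tendsto_id
    have hq : Tendsto (fun n => proj (f ((r-1)*(K n) + j₀)) (Y (K n) j₀)) atTop (𝓝 p) :=
      (hQlim j₀ hj₀).comp hKtop
    refine (hC i hi).2.1.mem_of_tendsto hq (Eventually.of_forall fun n => ?_)
    rw [← hKeq n]
    exact (hPf _ _).1
  refine ⟨p, Set.mem_iInter₂.2 hpmem, fun y => ?_⟩
  exact hp.inner tendsto_const_nhds
end

section
/- Let H be a real Hilbert space, let {C_i}_{i=1}^m be a finite family of nonempty, closed and convex subsets of H, let r > 1 be an integer, let f : ℕ → {1,…,m} be surjective, let S_n be the associated unrestricted r-set DR operators, and let j_f ∈ ℕ satisfy f({1,…,j_f}) = {1,…,m}. Then ∩_{i=1}^m C_i ⊆ ∩_{n=0}^∞ Fix(S_n) ⊆ ∩_{n=0}^{j_f} Fix(S_n). If, in addition, int ∩_{i=1}^m C_i ≠ ∅, then ∩_{i=1}^m C_i = ∩_{n=0}^∞ Fix(S_n) = ∩_{n=0}^{j_f} Fix(S_n). -/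
open Filter Topology RealInnerProductSpace

variable {H : Type*} [NormedAddCommGroup H] [InnerProductSpace ℝ H] [CompleteSpace H]

/-- If `z ∈ C` then the projection fixes `z`. -/
lemma projFix {C : Set H} {P : H → H} (hP : IsProjOn C P) {z : H} (hz : z ∈ C) : P z = z := by
  have h := (hP z).2 z hz
  simp only [sub_self, norm_zero] at h
  have h0 : ‖z - P z‖ = 0 := le_antisymm h (norm_nonneg _)
  exact (sub_eq_zero.mp (norm_eq_zero.mp h0)).symm

/-- Variational inequality for the metric projection onto a convex set. -/
lemma proj_inner_nonneg {C : Set H} (hconv : Convex ℝ C) {P : H → H} (hP : IsProjOn C P)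
    (x : H) {a : H} (ha : a ∈ C) : 0 ≤ ⟪x - P x, P x - a⟫ := by
  by_cases hA : a = P x
  · simp [hA]
  set c : ℝ := ⟪x - P x, a - P x⟫ with hc
  have key : ∀ t : ℝ, 0 ≤ t → t ≤ 1 → 2 * t * c ≤ t ^ 2 * ‖a - P x‖ ^ 2 := by
    intro t ht0 ht1
    have hy : (1 - t) • P x + t • a ∈ C :=
      hconv (hP x).1 ha (by linarith) ht0 (by ring)
    have hineq := (hP x).2 _ hy
    have hxy : x - ((1 - t) • P x + t • a) = (x - P x) - t • (a - P x) := by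
      module
    rw [hxy] at hineq
    have hsq : ‖x - P x‖ ^ 2 ≤ ‖(x - P x) - t • (a - P x)‖ ^ 2 := by
      have := norm_nonneg ((x - P x) - t • (a - P x))
      nlinarith [norm_nonneg (x - P x)]
    have hexp : ‖(x - P x) - t • (a - P x)‖ ^ 2 =
        ‖x - P x‖ ^ 2 - 2 * (t * c) + t ^ 2 * ‖a - P x‖ ^ 2 := by
      rw [norm_sub_sq_real (x - P x) (t • (a - P x)), real_inner_smul_right, norm_smul,
        Real.norm_eq_abs, abs_of_nonneg ht0]
      ring
    rw [hexp] at hsq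
    nlinarith
  have hc0 : c ≤ 0 := by
    by_contra hcpos
    push_neg at hcpos
    set d : ℝ := ‖a - P x‖ ^ 2 with hd
    have hdpos : 0 < d := by
      have hne : a - P x ≠ 0 := sub_ne_zero.mpr hA
      rw [hd]
      exact pow_pos (norm_pos_iff.mpr hne) 2
    set t : ℝ := min 1 (c / d) with htdef
    have ht0 : 0 < t := lt_min one_pos (div_pos hcpos hdpos)
    have ht1 : t ≤ 1 := min_le_left _ _
    have htd : t * d ≤ c := by
      have : t ≤ c / d := min_le_right _ _
      calc t * d ≤ (c / d) * d := by nlinarith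
        _ = c := by field_simp
    have := key t ht0.le ht1
    nlinarith
  have : ⟪x - P x, P x - a⟫ = -c := by
    rw [hc, ← inner_neg_right]; congr 1; abel
  rw [this]; linarith

/-- If `a ∈ interior C` and the variational quantity vanishes, then `x` is its own projection. -/
lemma proj_eq_of_inner_eq_zero {C : Set H} (hconv : Convex ℝ C) {P : H → H}
    (hP : IsProjOn C P) {a : H} (ha : a ∈ interior C) {x : H}
    (h0 : ⟪x - P x, P x - a⟫ = 0) : P x = x := by
  by_contra hne
  obtain ⟨ε, hε, hball⟩ := Metric.isOpen_iff.mp isOpen_interior a ha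
  set u : H := x - P x with hu
  have hune : u ≠ 0 := sub_ne_zero.mpr (fun h => hne h.symm)
  have hunorm : (0:ℝ) < ‖u‖ := norm_pos_iff.mpr hune
  set s : ℝ := ε / (2 * ‖u‖) with hs
  have hspos : 0 < s := by positivity
  have hbmem : a + s • u ∈ C := by
    apply interior_subset
    apply hball
    simp only [Metric.mem_ball, dist_eq_norm]
    have : a + s • u - a = s • u := by abel
    rw [this, norm_smul, Real.norm_eq_abs, abs_of_nonneg hspos.le, hs]
    have heq : ε / (2 * ‖u‖) * ‖u‖ = ε / 2 := by
      field_simp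
    rw [heq]
    linarith
  have hnn := proj_inner_nonneg hconv hP x hbmem
  have hcalc : ⟪x - P x, P x - (a + s • u)⟫ = -(s * ‖u‖ ^ 2) := by
    have : P x - (a + s • u) = (P x - a) - s • u := by abel
    rw [this, inner_sub_right, h0, real_inner_smul_right, real_inner_self_eq_norm_sq]
    ring
  rw [hcalc] at hnn
  nlinarith [mul_pos hspos (pow_pos hunorm 2)]

/-- Key lemma: a fixed point of `drS proj r f n` with `a ∈ int ∩ C_i` lies in every set used. -/
lemma fix_mem_of_interior (m r : ℕ) (C : ℕ → Set H)
    (hC : ∀ i ∈ Set.Icc 1 m, (C i).Nonempty ∧ IsClosed (C i) ∧ Convex ℝ (C i))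
    (proj : ℕ → H → H) (hproj : ∀ i ∈ Set.Icc 1 m, IsProjOn (C i) (proj i))
    (f : ℕ → ℕ) (hf : Set.range f = Set.Icc 1 m)
    {a : H} (ha : a ∈ interior (⋂ i ∈ Set.Icc 1 m, C i))
    (n : ℕ) {z : H} (hz : drS proj r f n z = z) :
    ∀ j < r, z ∈ C (f ((r - 1) * n + j)) := by
  set g : ℕ → H → H := fun j y => (2 : ℝ) • proj (f ((r - 1) * n + j)) y - y with hg
  set w : ℕ → H := fun j => compSeq j g z with hw
  have hw0 : w 0 = z := rfl
  have hwsucc : ∀ j, w (j + 1) = g j (w j) := fun j => rfl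
  have hwr : w r = z := by
    have hz' : (2⁻¹ : ℝ) • (z + w r) = z := hz
    have h2 : z + w r = (2 : ℝ) • z := by
      have := congrArg (fun v => (2 : ℝ) • v) hz'
      simpa [smul_smul] using this
    have h2' : z + w r = z + z := by rw [h2, two_smul]
    exact add_left_cancel h2'
  -- facts about the index at step j
  have hidx : ∀ j, f ((r - 1) * n + j) ∈ Set.Icc 1 m := fun j => hf ▸ Set.mem_range_self _
  have haC : ∀ j, a ∈ C (f ((r - 1) * n + j)) := fun j =>
    Set.mem_iInter₂.mp (interior_subset ha) _ (hidx j)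
  have haI : ∀ j, a ∈ interior (C (f ((r - 1) * n + j))) := fun j =>
    interior_mono (Set.biInter_subset_of_mem (hidx j)) ha
  set t : ℕ → ℝ := fun j =>
    ⟪w j - proj (f ((r - 1) * n + j)) (w j), proj (f ((r - 1) * n + j)) (w j) - a⟫ with hT
  have ht0 : ∀ j, 0 ≤ t j := fun j =>
    proj_inner_nonneg (hC _ (hidx j)).2.2 (hproj _ (hidx j)) (w j) (haC j)
  have hN : ∀ j, ‖w (j + 1) - a‖ ^ 2 = ‖w j - a‖ ^ 2 - 4 * t j := by
    intro j
    set p : H := proj (f ((r - 1) * n + j)) (w j) with hp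
    have h1 : w (j + 1) - a = (p - a) - (w j - p) := by
      rw [hwsucc]
      show (2 : ℝ) • p - w j - a = (p - a) - (w j - p)
      module
    have h2 : w j - a = (w j - p) + (p - a) := by abel
    rw [h1, norm_sub_sq_real, h2, norm_add_sq_real, real_inner_comm]
    have : t j = ⟪w j - p, p - a⟫ := rfl
    rw [this]
    ring
  have hsum : ∀ k, ‖w k - a‖ ^ 2 = ‖w 0 - a‖ ^ 2 - 4 * ∑ j ∈ Finset.range k, t j := by
    intro k
    induction k with
    | zero => simp
    | succ k ih => rw [hN, ih, Finset.sum_range_succ]; ring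
  have hsum0 : ∑ j ∈ Finset.range r, t j = 0 := by
    have := hsum r
    rw [hwr, hw0] at this
    linarith
  have htz : ∀ j < r, t j = 0 := fun j hj =>
    (Finset.sum_eq_zero_iff_of_nonneg (fun j _ => ht0 j)).mp hsum0 j (Finset.mem_range.mpr hj)
  have hstep : ∀ j < r, proj (f ((r - 1) * n + j)) (w j) = w j ∧ w (j + 1) = w j := by
    intro j hj
    have hp := proj_eq_of_inner_eq_zero (hC _ (hidx j)).2.2 (hproj _ (hidx j)) (haI j) (htz j hj)
    refine ⟨hp, ?_⟩
    rw [hwsucc]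
    show (2 : ℝ) • proj (f ((r - 1) * n + j)) (w j) - w j = w j
    rw [hp, two_smul]
    abel
  have hwz : ∀ j, j ≤ r → w j = z := by
    intro j
    induction j with
    | zero => intro _; exact hw0
    | succ j ih =>
      intro hjr
      have hjlt : j < r := Nat.lt_of_succ_le hjr
      rw [(hstep j hjlt).2]
      exact ih hjlt.le
  intro j hj
  have hmem : proj (f ((r - 1) * n + j)) (w j) ∈ C (f ((r - 1) * n + j)) :=
    ((hproj _ (hidx j)) (w j)).1
  rw [(hstep j hj).1, hwz j hj.le] at hmem
  exact hmem

/-- Lemma 4.2: inclusions between the intersection of the sets and the fixed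
point sets of the operators `S_n`, with equalities when the interior is nonempty. -/
theorem stmt8
    (m r : ℕ) (hr : 1 < r)
    (C : ℕ → Set H)
    (hC : ∀ i ∈ Set.Icc 1 m, (C i).Nonempty ∧ IsClosed (C i) ∧ Convex ℝ (C i))
    (proj : ℕ → H → H) (hproj : ∀ i ∈ Set.Icc 1 m, IsProjOn (C i) (proj i))
    (f : ℕ → ℕ) (hf : Set.range f = Set.Icc 1 m)
    (jf : ℕ) (hjf : f '' Set.Icc 1 jf = Set.Icc 1 m) :
    ((⋂ i ∈ Set.Icc 1 m, C i) ⊆ ⋂ n : ℕ, {z : H | drS proj r f n z = z}) ∧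
    ((⋂ n : ℕ, {z : H | drS proj r f n z = z}) ⊆
      ⋂ n ∈ Set.Iic jf, {z : H | drS proj r f n z = z}) ∧
    ((interior (⋂ i ∈ Set.Icc 1 m, C i)).Nonempty →
      (⋂ i ∈ Set.Icc 1 m, C i) = (⋂ n : ℕ, {z : H | drS proj r f n z = z}) ∧
      (⋂ i ∈ Set.Icc 1 m, C i) = ⋂ n ∈ Set.Iic jf, {z : H | drS proj r f n z = z}) := by

  have part1 : (⋂ i ∈ Set.Icc 1 m, C i) ⊆ ⋂ n : ℕ, {z : H | drS proj r f n z = z} := by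
    intro z hz
    have hzC : ∀ i ∈ Set.Icc 1 m, z ∈ C i := Set.mem_iInter₂.mp hz
    rw [Set.mem_iInter]
    intro n
    have hcomp : ∀ j, compSeq j (fun j y => (2 : ℝ) • proj (f ((r - 1) * n + j)) y - y) z = z := by
      intro j
      induction j with
      | zero => rfl
      | succ j ih =>
        show (2 : ℝ) • proj (f ((r - 1) * n + j))
            (compSeq j (fun j y => (2 : ℝ) • proj (f ((r - 1) * n + j)) y - y) z) -
            compSeq j (fun j y => (2 : ℝ) • proj (f ((r - 1) * n + j)) y - y) z = z
        rw [ih]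
        have hi : f ((r - 1) * n + j) ∈ Set.Icc 1 m := hf ▸ Set.mem_range_self _
        rw [projFix (hproj _ hi) (hzC _ hi), two_smul]
        abel
    show (2⁻¹ : ℝ) • (z + compSeq r (fun j y => (2 : ℝ) • proj (f ((r - 1) * n + j)) y - y) z) = z
    rw [hcomp r, ← two_smul ℝ z, smul_smul]
    norm_num
  have part2 : (⋂ n : ℕ, {z : H | drS proj r f n z = z}) ⊆
      ⋂ n ∈ Set.Iic jf, {z : H | drS proj r f n z = z} := by
    intro z hz
    rw [Set.mem_iInter₂]
    intro n _
    exact Set.mem_iInter.mp hz n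
  refine ⟨part1, part2, ?_⟩
  rintro ⟨a, ha⟩
  have key : (⋂ n ∈ Set.Iic jf, {z : H | drS proj r f n z = z}) ⊆ ⋂ i ∈ Set.Icc 1 m, C i := by
    intro z hz
    rw [Set.mem_iInter₂]
    intro i hi
    rw [← hjf] at hi
    obtain ⟨k, hk, hfk⟩ := hi
    have hr1 : 0 < r - 1 := by omega
    have hjr : k % (r - 1) < r := by
      have := Nat.mod_lt k hr1
      omega
    have hkeq : (r - 1) * (k / (r - 1)) + k % (r - 1) = k := Nat.div_add_mod k (r - 1)
    have hn : k / (r - 1) ≤ jf := le_trans (Nat.div_le_self k (r - 1)) hk.2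
    have hzfix : drS proj r f (k / (r - 1)) z = z :=
      Set.mem_iInter₂.mp hz _ hn
    have := fix_mem_of_interior m r C hC proj hproj f hf ha (k / (r - 1)) hzfix _ hjr
    rw [hkeq, hfk] at this
    exact this
  exact ⟨Set.Subset.antisymm part1 (Set.Subset.trans part2 key),
    Set.Subset.antisymm (Set.Subset.trans part1 part2) key⟩
end

section
/- Let H be a real Hilbert space, let (v_n)_{n=0}^∞ be a bounded sequence in H, let {T_i}_{i=1}^m be a finite family of strongly nonexpansive operators on H such that the origin 0 is a common fixed point of all T_i, and let v ∈ H. Suppose that v_n converges weakly to v and that for each i = 1,…,m, ‖T_{i−1}∘⋯∘T_1 v_n‖ − ‖T_i∘⋯∘T_1 v_n‖ → 0 (where the empty composition is the identity). Then the sequence (T_m∘⋯∘T_1 v_n)_{n=0}^∞ converges weakly to v, and v is a common fixed point of the family {T_i}_{i=1}^m. -/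
open Filter Topology RealInnerProductSpace

variable {H : Type*} [NormedAddCommGroup H] [InnerProductSpace ℝ H] [CompleteSpace H]

/-
Write `u_i(n) = T_i ∘ ⋯ ∘ T_1 (v n)`. The hypotheses say that `T_i` barely shrinks the norm of
`u_{i-1}(n)`; since `T_i 0 = 0`, Condition (S) applied to the pair `(u_{i-1}(n), 0)` upgrades this
to `u_{i-1}(n) - u_i(n) → 0` strongly. Telescoping, every `u_i(n)` differs from `v n` by a strongly
null sequence, hence also converges weakly to `w`; then `u_{i-1}(n) ⇀ w` together with
`u_{i-1}(n) - T_i (u_{i-1}(n)) → 0` gives `T_i w = w` by the demiclosedness principle.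
-/

theorem compSeq_succ_apply {α : Type*} (n : ℕ) (g : ℕ → α → α) (x : α) :
    compSeq (n + 1) g x = g n (compSeq n g x) :=
  rfl

theorem norm_compSeq_le {E : Type*} [SeminormedAddCommGroup E] {g : ℕ → E → E} {i : ℕ}
    (hg : ∀ j < i, ∀ x, ‖g j x‖ ≤ ‖x‖) (x : E) : ‖compSeq i g x‖ ≤ ‖x‖ := by
  induction i with
  | zero => rfl
  | succ i ih =>
    exact (hg i i.lt_succ_self _).trans (ih fun j hj => hg j (hj.trans i.lt_succ_self))

theorem tendsto_compSeq_sub {α E : Type*} [AddCommGroup E] [TopologicalSpace E]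
    [IsTopologicalAddGroup E] {g : ℕ → E → E} {l : Filter α} {v : α → E} {i : ℕ}
    (hg : ∀ j < i, Tendsto (fun n => compSeq j g (v n) - g j (compSeq j g (v n))) l (𝓝 0)) :
    Tendsto (fun n => compSeq i g (v n) - v n) l (𝓝 0) := by
  induction i with
  | zero => simpa [compSeq] using tendsto_const_nhds
  | succ i ih =>
    have hprev := ih fun j hj => hg j (hj.trans i.lt_succ_self)
    simpa only [compSeq_succ_apply, sub_sub_sub_cancel_left, sub_zero] using
      hprev.sub (hg i i.lt_succ_self)

section Normed

variable {E : Type*} [NormedAddCommGroup E]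

theorem Nonexpansive.norm_apply_le {T : E → E} (hT : Nonexpansive T) (hT0 : T 0 = 0) (x : E) :
    ‖T x‖ ≤ ‖x‖ := by
  simpa [hT0] using hT x 0

theorem CondS.tendsto_sub_apply {T : E → E} (hT : CondS T) (hT0 : T 0 = 0) {x : ℕ → E}
    (hbdd : ∃ c, ∀ n, ‖x n‖ ≤ c)
    (hnorm : Tendsto (fun n => ‖x n‖ - ‖T (x n)‖) atTop (𝓝 0)) :
    Tendsto (fun n => x n - T (x n)) atTop (𝓝 0) := by
  simpa [hT0] using hT x (fun _ => 0) (by simpa using hbdd) (by simpa [hT0] using hnorm)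

section InnerProductSpace

variable [InnerProductSpace ℝ E]

theorem WeakConvergesTo.of_tendsto_sub {x y : ℕ → E} {w : E} (hx : WeakConvergesTo x w)
    (hxy : Tendsto (fun n => y n - x n) atTop (𝓝 0)) : WeakConvergesTo y w := by
  intro z
  have hnull : Tendsto (fun n => ⟪y n - x n, z⟫) atTop (𝓝 0) := by
    simpa using hxy.inner (tendsto_const_nhds (x := z))
  simpa [inner_sub_left] using (hx z).add hnull

/-- Demiclosedness principle: `Id - T` is demiclosed at `0`. -/
theorem Nonexpansive.apply_eq_of_weakConvergesTo {T : E → E} (hT : Nonexpansive T)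
    {x : ℕ → E} {w : E} (hbdd : ∃ c, ∀ n, ‖x n - w‖ ≤ c) (hx : WeakConvergesTo x w)
    (hfix : Tendsto (fun n => x n - T (x n)) atTop (𝓝 0)) : T w = w := by
  obtain ⟨c, hc⟩ := hbdd
  set q := w - T w
  set ε := fun n => ‖x n - T (x n)‖
  -- Expand `‖x n - T w‖²` around `x n - w` and compare with `‖x n - T w‖ ≤ ε n + ‖x n - w‖`.
  have hkey : ∀ n, ‖q‖ ^ 2 ≤ ε n ^ 2 + 2 * c * ε n - 2 * ⟪x n - w, q⟫ := by
    intro n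
    have htri : ‖x n - T w‖ ≤ ε n + ‖x n - w‖ :=
      calc ‖x n - T w‖ = ‖(x n - T (x n)) + (T (x n) - T w)‖ := by rw [sub_add_sub_cancel]
        _ ≤ ε n + ‖T (x n) - T w‖ := norm_add_le _ _
        _ ≤ ε n + ‖x n - w‖ := add_le_add_right (hT _ _) _
    have hexpand : ‖x n - T w‖ ^ 2 = ‖x n - w‖ ^ 2 + 2 * ⟪x n - w, q⟫ + ‖q‖ ^ 2 := by
      rw [← norm_add_sq_real, sub_add_sub_cancel]
    have hsq := pow_le_pow_left₀ (norm_nonneg _) htri 2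
    nlinarith [hc n, norm_nonneg (x n - T (x n)), norm_nonneg (x n - w)]
  have hε : Tendsto ε atTop (𝓝 0) := by simpa using hfix.norm
  have hinner : Tendsto (fun n => ⟪x n - w, q⟫) atTop (𝓝 0) := by
    simpa [inner_sub_left] using (hx q).sub_const ⟪w, q⟫
  have hlim : Tendsto (fun n => ε n ^ 2 + 2 * c * ε n - 2 * ⟪x n - w, q⟫) atTop (𝓝 0) := by
    simpa using ((hε.pow 2).add (hε.const_mul (2 * c))).sub (hinner.const_mul 2)
  have hq : ‖q‖ ^ 2 ≤ 0 := ge_of_tendsto' hlim hkey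
  rw [sq_nonpos_iff, norm_eq_zero, sub_eq_zero] at hq
  exact hq.symm

end InnerProductSpace

end Normed

/-- Lemma 4.4: weak convergence of `T_m ∘ ⋯ ∘ T_1 v_n` to a common fixed
point. -/
theorem stmt10
    (m : ℕ) (v : ℕ → H) (hbdd : ∃ c : ℝ, ∀ n, ‖v n‖ ≤ c)
    (T : ℕ → H → H)
    (hT : ∀ i ∈ Set.Icc 1 m, StronglyNonexpansive (T i))
    (hT0 : ∀ i ∈ Set.Icc 1 m, T i 0 = 0)
    (w : H) (hw : WeakConvergesTo v w)
    (hnorm : ∀ i ∈ Set.Icc 1 m,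
      Tendsto (fun n => ‖compSeq (i - 1) (fun j => T (j + 1)) (v n)‖ -
        ‖compSeq i (fun j => T (j + 1)) (v n)‖) atTop (𝓝 0)) :
    WeakConvergesTo (fun n => compSeq m (fun j => T (j + 1)) (v n)) w ∧
      ∀ i ∈ Set.Icc 1 m, T i w = w := by
  obtain ⟨c, hc⟩ := hbdd
  set u := fun i n => compSeq i (fun j => T (j + 1)) (v n)
  have hmem {j : ℕ} (hj : j < m) : j + 1 ∈ Set.Icc 1 m := ⟨j.succ_pos, hj⟩
  have hu_le {i : ℕ} (hi : i ≤ m) (n : ℕ) : ‖u i n‖ ≤ c :=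
    (norm_compSeq_le (fun j hj => (hT _ (hmem (hj.trans_le hi))).1.norm_apply_le
      (hT0 _ (hmem (hj.trans_le hi)))) _).trans (hc n)
  have hstep {j : ℕ} (hj : j < m) : Tendsto (fun n => u j n - T (j + 1) (u j n)) atTop (𝓝 0) :=
    (hT _ (hmem hj)).2.tendsto_sub_apply (hT0 _ (hmem hj)) ⟨c, hu_le hj.le⟩
      (hnorm _ (hmem hj))
  have hweak {i : ℕ} (hi : i ≤ m) : WeakConvergesTo (u i) w :=
    hw.of_tendsto_sub (tendsto_compSeq_sub fun j hj => hstep (hj.trans_le hi))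
  refine ⟨hweak le_rfl, fun i hi => ?_⟩
  obtain ⟨j, rfl⟩ : ∃ j, i = j + 1 := Nat.exists_eq_add_one.mpr hi.1
  have hj : j < m := hi.2
  exact (hT _ hi).1.apply_eq_of_weakConvergesTo
    ⟨c + ‖w‖, fun n => (norm_sub_le _ _).trans (add_le_add_left (hu_le hj.le n) _)⟩
    (hweak hj.le) (hstep hj)
end

section
/- Let H be a real Hilbert space, let {T_i}_{i=1}^m be a finite family of strongly nonexpansive operators on H such that the origin 0 is a common fixed point of all T_i, let M be a positive integer, and let h : ℕ → {1,…,m} be an M-quasi-periodic surjection. Let x ∈ H and let v be a weak cluster point of the sequence (P_n x)_{n=0}^∞, where P_n := T_{h(n)}∘⋯∘T_{h(0)} is the unrestricted product of {T_i}_{i=1}^m determined by h. Then v is a common fixed point of the family {T_i}_{i=1}^m. -/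
open Filter Topology RealInnerProductSpace

variable {H : Type*} [NormedAddCommGroup H] [InnerProductSpace ℝ H] [CompleteSpace H]

set_option maxHeartbeats 1000000 in
/-- Lemma 4.5: every weak cluster point of the unrestricted product sequence is
a common fixed point. -/
theorem stmt11
    (m M : ℕ) (hM : 0 < M)
    (T : ℕ → H → H)
    (hT : ∀ i ∈ Set.Icc 1 m, StronglyNonexpansive (T i))
    (hT0 : ∀ i ∈ Set.Icc 1 m, T i 0 = 0)
    (h : ℕ → ℕ) (hh : Set.range h = Set.Icc 1 m)
    (hqp : ∀ n : ℕ, h '' Set.Ico n (n + M) = Set.range h)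
    (x v : H)
    (hv : ∃ φ : ℕ → ℕ, StrictMono φ ∧
      WeakConvergesTo (fun k => compSeq (φ k + 1) (fun i => T (h i)) x) v) :
    ∀ i ∈ Set.Icc 1 m, T i v = v := by
  obtain ⟨φ, hφ, hconv⟩ := hv
  set g : ℕ → H → H := fun i => T (h i) with hg
  set X : ℕ → H := fun n => compSeq (n + 1) g x with hX
  have hstep : ∀ n, X (n + 1) = T (h (n + 1)) (X n) := fun n => rfl
  have hhmem : ∀ n, h n ∈ Set.Icc 1 m := fun n => hh ▸ Set.mem_range_self n
  -- contraction of each step at 0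
  have hcontr : ∀ n y, ‖T (h n) y‖ ≤ ‖y‖ := by
    intro n y
    have := (hT (h n) (hhmem n)).1 y 0
    simpa [hT0 (h n) (hhmem n)] using this
  have hmono : ∀ n, ‖X (n + 1)‖ ≤ ‖X n‖ := by
    intro n; rw [hstep n]; exact hcontr (n + 1) (X n)
  have hbound : ∀ n, ‖X n‖ ≤ ‖x‖ := by
    intro n; induction n with
    | zero => exact hcontr 0 x
    | succ n ih => exact (hmono n).trans ih
  -- convergence of the norms
  have hanti : Antitone (fun n => ‖X n‖) := antitone_nat_of_succ_le hmono
  have hbdd : BddBelow (Set.range fun n => ‖X n‖) :=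
    ⟨0, by rintro y ⟨n, rfl⟩; exact norm_nonneg _⟩
  have hlim := tendsto_atTop_ciInf hanti hbdd
  have hlim' : Tendsto (fun n => ‖X (n + 1)‖) atTop (𝓝 (⨅ n, ‖X n‖)) :=
    hlim.comp (tendsto_add_atTop_nat 1)
  have hdiff0 : Tendsto (fun n => ‖X n‖ - ‖X (n + 1)‖) atTop (𝓝 0) := by
    simpa using hlim.sub hlim'
  have hdiffnn : ∀ n, 0 ≤ ‖X n‖ - ‖X (n + 1)‖ := fun n => sub_nonneg.2 (hmono n)
  -- truncated sequences and Condition (S)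
  set Z : ℕ → ℕ → H := fun i' n => if h (n + 1) = i' then X n else 0 with hZ
  have hd : ∀ i' ∈ Set.Icc 1 m,
      Tendsto (fun n => Z i' n - T i' (Z i' n)) atTop (𝓝 (0 : H)) := by
    intro i' hi'
    obtain ⟨hne', hcs'⟩ := hT i' hi'
    have h0 := hT0 i' hi'
    have hb : ∀ n, ‖Z i' n - 0‖ ≤ ‖x‖ := by
      intro n
      by_cases hc : h (n + 1) = i' <;> simp [hZ, hc, hbound n, norm_nonneg x]
    have hnc : Tendsto (fun n => ‖Z i' n - 0‖ - ‖T i' (Z i' n) - T i' 0‖) atTop (𝓝 0) := by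
      apply squeeze_zero (g := fun n => ‖X n‖ - ‖X (n + 1)‖)
      · intro n
        by_cases hc : h (n + 1) = i'
        · have : T i' (X n) = X (n + 1) := by rw [hstep n, hc]
          simp [hZ, hc, h0, this, hdiffnn n]
        · simp [hZ, hc, h0]
      · intro n
        by_cases hc : h (n + 1) = i'
        · have : T i' (X n) = X (n + 1) := by rw [hstep n, hc]
          simp [hZ, hc, h0, this]
        · simp [hZ, hc, h0, hdiffnn n]
      · exact hdiff0
    have := hcs' (Z i') (fun _ => 0) ⟨‖x‖, hb⟩ hnc
    simpa [h0] using this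
  -- successive differences go to 0
  set e : ℕ → H := fun n => X (n + 1) - X n with he
  have heten : ∀ n, ‖e n‖ ≤ ∑ i' ∈ Finset.Icc 1 m, ‖Z i' n - T i' (Z i' n)‖ := by
    intro n
    have hmem : h (n + 1) ∈ Finset.Icc 1 m := by
      have := hhmem (n + 1); simpa [Finset.mem_Icc, Set.mem_Icc] using this
    have hval : Z (h (n + 1)) n - T (h (n + 1)) (Z (h (n + 1)) n) = -e n := by
      simp [hZ, he, hstep n]
    calc ‖e n‖ = ‖Z (h (n + 1)) n - T (h (n + 1)) (Z (h (n + 1)) n)‖ := by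
          rw [hval, norm_neg]
      _ ≤ ∑ i' ∈ Finset.Icc 1 m, ‖Z i' n - T i' (Z i' n)‖ :=
          Finset.single_le_sum (f := fun i' => ‖Z i' n - T i' (Z i' n)‖)
            (fun _ _ => norm_nonneg _) hmem
  have hetend : Tendsto e atTop (𝓝 (0 : H)) := by
    rw [tendsto_zero_iff_norm_tendsto_zero]
    apply squeeze_zero (fun n => norm_nonneg _) heten
    have : (0 : ℝ) = ∑ i' ∈ Finset.Icc 1 m, (0 : ℝ) := by simp
    rw [this]
    apply tendsto_finset_sum
    intro i' hi'
    have hi'' : i' ∈ Set.Icc 1 m := by simpa [Set.mem_Icc] using Finset.mem_Icc.1 hi'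
    simpa using (hd i' hi'').norm
  -- telescoping estimate
  have htel : ∀ p d, ‖X (p + d) - X p‖ ≤ ∑ j ∈ Finset.range d, ‖e (p + j)‖ := by
    intro p d
    induction d with
    | zero => simp
    | succ d ih =>
      have hsplit : X (p + (d + 1)) - X p = e (p + d) + (X (p + d) - X p) := by
        have : p + (d + 1) = (p + d) + 1 := by omega
        rw [this]; simp only [he]; abel
      rw [hsplit, Finset.sum_range_succ]
      calc ‖e (p + d) + (X (p + d) - X p)‖ ≤ ‖e (p + d)‖ + ‖X (p + d) - X p‖ :=
            norm_add_le _ _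
        _ ≤ ‖e (p + d)‖ + ∑ j ∈ Finset.range d, ‖e (p + j)‖ := by linarith
        _ = (∑ j ∈ Finset.range d, ‖e (p + j)‖) + ‖e (p + d)‖ := by ring
  -- fix i and choose the nearby index
  intro i hi
  have hexist : ∀ k, ∃ n, φ k ≤ n ∧ n < φ k + M ∧ h (n + 1) = i := by
    intro k
    have hq := hqp (φ k + 1)
    have hi' : i ∈ h '' Set.Ico (φ k + 1) (φ k + 1 + M) := by rw [hq, hh]; exact hi
    obtain ⟨n', ⟨hn1, hn2⟩, hn3⟩ := hi'
    refine ⟨n' - 1, by omega, by omega, ?_⟩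
    have hn' : n' - 1 + 1 = n' := by omega
    rw [hn']; exact hn3
  choose ν hν1 hν2 hν3 using hexist
  have hνtop : Tendsto ν atTop atTop :=
    tendsto_atTop_mono (fun k => (hφ.le_apply).trans (hν1 k)) tendsto_id
  -- z k := X (ν k)
  have hz1 : Tendsto (fun k => X (ν k) - T i (X (ν k))) atTop (𝓝 (0 : H)) := by
    have := (hd i hi).comp hνtop
    exact this.congr fun k => by simp [Function.comp, hZ, hν3 k]
  have hz2 : Tendsto (fun k => X (ν k) - X (φ k)) atTop (𝓝 (0 : H)) := by
    rw [tendsto_zero_iff_norm_tendsto_zero]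
    apply squeeze_zero (fun k => norm_nonneg _)
      (g := fun k => ∑ j ∈ Finset.range M, ‖e (φ k + j)‖)
    · intro k
      have hk1 := hν1 k
      have hk2 := hν2 k
      have hν : ν k = φ k + (ν k - φ k) := by omega
      rw [hν]
      refine (htel (φ k) (ν k - φ k)).trans ?_
      exact Finset.sum_le_sum_of_subset_of_nonneg
        (Finset.range_subset_range.2 (by omega)) (fun _ _ _ => norm_nonneg _)
    · have hz : (0 : ℝ) = ∑ j ∈ Finset.range M, (0 : ℝ) := by simp
      rw [hz]
      apply tendsto_finset_sum
      intro j _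
      have hφj : Tendsto (fun k => φ k + j) atTop atTop :=
        tendsto_atTop_mono (fun k => Nat.le_add_right (φ k) j) hφ.tendsto_atTop
      exact (by simpa using hetend.norm : Tendsto (fun n => ‖e n‖) atTop (𝓝 0)).comp hφj
  -- weak convergence of z to v
  have hweak : ∀ y : H, Tendsto (fun k => ⟪X (ν k), y⟫) atTop (𝓝 ⟪v, y⟫) := by
    intro y
    have h1 : Tendsto (fun k => ⟪X (φ k), y⟫) atTop (𝓝 ⟪v, y⟫) := hconv y
    have h2 : Tendsto (fun k => ⟪X (ν k) - X (φ k), y⟫) atTop (𝓝 (0 : ℝ)) := by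
      have := hz2.inner (𝕜 := ℝ) (tendsto_const_nhds (x := y))
      simpa using this
    have h3 := h1.add h2
    rw [add_zero] at h3
    refine h3.congr fun k => ?_
    rw [inner_sub_left]; ring
  -- demiclosedness argument
  set w : H := v - T i v with hw
  have hεnn : ∀ k, (0 : ℝ) ≤ ‖X (ν k) - T i (X (ν k))‖ := fun k => norm_nonneg _
  have hkey : ∀ k, ‖w‖ ^ 2 ≤
      2 * ‖X (ν k) - T i (X (ν k))‖ * (‖x‖ + ‖v‖) + ‖X (ν k) - T i (X (ν k))‖ ^ 2
        - 2 * ⟪X (ν k) - v, w⟫ := by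
    intro k
    set z := X (ν k) with hzdef
    set ε := ‖z - T i z‖ with hε
    have hs : ‖z - v‖ ≤ ‖x‖ + ‖v‖ :=
      (norm_sub_le _ _).trans (by have := hbound (ν k); linarith)
    have htri : ‖z - T i v‖ ≤ ε + ‖z - v‖ := by
      calc ‖z - T i v‖ = ‖(z - T i z) + (T i z - T i v)‖ := by
            congr 1; abel
        _ ≤ ‖z - T i z‖ + ‖T i z - T i v‖ := norm_add_le _ _
        _ ≤ ε + ‖z - v‖ := by
            have := (hT i hi).1 z v; rw [hε]; linarith
    have hsq : ‖z - T i v‖ ^ 2 ≤ (ε + ‖z - v‖) ^ 2 := by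
      apply pow_le_pow_left₀ (norm_nonneg _) htri
    have hexp : ‖z - T i v‖ ^ 2 = ‖z - v‖ ^ 2 + 2 * ⟪z - v, w⟫ + ‖w‖ ^ 2 := by
      have hzw : z - T i v = (z - v) + w := by rw [hw]; abel
      rw [hzw]
      exact norm_add_sq_real _ _
    have hεs : ε * ‖z - v‖ ≤ ε * (‖x‖ + ‖v‖) :=
      mul_le_mul_of_nonneg_left hs (hεnn k)
    nlinarith [hsq, hexp, hεs]
  have hε0 : Tendsto (fun k => ‖X (ν k) - T i (X (ν k))‖) atTop (𝓝 0) := by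
    simpa using hz1.norm
  have hip : Tendsto (fun k => ⟪X (ν k) - v, w⟫) atTop (𝓝 (0 : ℝ)) := by
    have := (hweak w).sub (tendsto_const_nhds (x := ⟪v, w⟫))
    rw [sub_self] at this
    refine this.congr fun k => ?_
    rw [inner_sub_left]
  have hR : Tendsto (fun k =>
      2 * ‖X (ν k) - T i (X (ν k))‖ * (‖x‖ + ‖v‖) + ‖X (ν k) - T i (X (ν k))‖ ^ 2
        - 2 * ⟪X (ν k) - v, w⟫) atTop (𝓝 0) := by
    have := (((hε0.const_mul 2).mul_const (‖x‖ + ‖v‖)).add (hε0.pow 2)).sub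
      (hip.const_mul 2)
    simpa using this
  have hfin : ‖w‖ ^ 2 ≤ 0 := ge_of_tendsto hR (Eventually.of_forall hkey)
  have hwz : w = 0 := by
    have : ‖w‖ = 0 := by nlinarith [norm_nonneg w, sq_nonneg ‖w‖]
    exact norm_eq_zero.1 this
  have : v - T i v = 0 := hwz
  linear_combination (norm := abel) -this
end
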